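/- arXiv:solv-int/9709007 — 12 statements merged into one kernel-verified Lean document; each statement's English description precedes it below -/
import Mathlib

section
/- Let (H_i) be a Lamé solution with each H_i nowhere vanishing, let (X_i) be an ℝ^D-valued tangent solution (i.e., each of the D component families is a tangent solution), and let x : ℤ^N → ℝ^D satisfy Δ_i x = (T_i H_i)·X_i for every i = 1,…,N. Define A_{ij} := (Δ_j H_i)/H_i for i ≠ j. Then x satisfies the discrete Laplace equation: for all i ≠ j, Δ_i Δ_j x = (T_i A_{ij})·Δ_i x + (T_j A_{ji})·Δ_j x. -/
noncomputable section

/-- Shift operator `T_j`: `(T_j f)(n) = f(n + e_j)`. -/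
def T {N : ℕ} (j : Fin N) (f : (Fin N → ℤ) → ℝ) : (Fin N → ℤ) → ℝ :=
  fun n => f (n + Pi.single j 1)

/-- Difference operator `Δ_j = T_j − 1`. -/
def Δ {N : ℕ} (j : Fin N) (f : (Fin N → ℤ) → ℝ) : (Fin N → ℤ) → ℝ :=
  fun n => f (n + Pi.single j 1) - f n

/-- If `(H_i)` is a nowhere-vanishing Lamé solution, `(X_i)` an `ℝ^D`-valued tangent
solution and `Δ_i x = (T_i H_i)·X_i`, then with `A_{ij} = (Δ_j H_i)/H_i` the lattice `x`
satisfies the discrete Laplace equation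
`Δ_i Δ_j x = (T_i A_{ij})·Δ_i x + (T_j A_{ji})·Δ_j x` for `i ≠ j`. -/
theorem statement_0 (N D : ℕ) (hN : 2 ≤ N) (hD : 1 ≤ D)
    (Q : Fin N → Fin N → (Fin N → ℤ) → ℝ)
    (H : Fin N → (Fin N → ℤ) → ℝ)
    (hLame : ∀ i j : Fin N, i ≠ j → Δ i (H j) = Q i j * T i (H i))
    (hH : ∀ (i : Fin N) (n : Fin N → ℤ), H i n ≠ 0)
    (X : Fin N → Fin D → (Fin N → ℤ) → ℝ)
    (hX : ∀ (ℓ : Fin D) (j k : Fin N), j ≠ k → Δ k (X j ℓ) = T k (Q j k) * X k ℓ)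
    (x : Fin D → (Fin N → ℤ) → ℝ)
    (hx : ∀ (i : Fin N) (ℓ : Fin D), Δ i (x ℓ) = T i (H i) * X i ℓ)
    (A : Fin N → Fin N → (Fin N → ℤ) → ℝ)
    (hA : ∀ i j : Fin N, i ≠ j → A i j = Δ j (H i) / H i) :
    ∀ i j : Fin N, i ≠ j → ∀ ℓ : Fin D,
      Δ i (Δ j (x ℓ)) = T i (A i j) * Δ i (x ℓ) + T j (A j i) * Δ j (x ℓ) := by
  intro i j hij ℓ
  funext n
  have hc : n + Pi.single j 1 + Pi.single i 1 = n + Pi.single i 1 + Pi.single j 1 :=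
    add_right_comm n _ _
  have h1 := congrFun (hx i ℓ) (n + Pi.single j 1)
  have h2 := congrFun (hx j ℓ) n
  have h3 := congrFun (hx i ℓ) n
  have h4 := congrFun (hX ℓ i j hij) n
  have h5 := congrFun (hLame i j hij) (n + Pi.single j 1)
  have hgA := congrFun (hA i j hij) (n + Pi.single i 1)
  have hgB := congrFun (hA j i hij.symm) (n + Pi.single j 1)
  simp only [Δ, T, Pi.add_apply, Pi.mul_apply, Pi.div_apply, hc] at h1 h2 h3 h4 h5 hgA hgB ⊢
  rw [hgA, hgB]
  have eA : (H i (n + Pi.single i 1 + Pi.single j 1) - H i (n + Pi.single i 1)) /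
      H i (n + Pi.single i 1) * (x ℓ (n + Pi.single i 1) - x ℓ n) =
      (H i (n + Pi.single i 1 + Pi.single j 1) - H i (n + Pi.single i 1)) * X i ℓ n := by
    rw [h3, div_mul_eq_mul_div, mul_div_assoc, mul_div_cancel_left₀ _ (hH i _)]
  have eB : (H j (n + Pi.single i 1 + Pi.single j 1) - H j (n + Pi.single j 1)) /
      H j (n + Pi.single j 1) * (x ℓ (n + Pi.single j 1) - x ℓ n) =
      (H j (n + Pi.single i 1 + Pi.single j 1) - H j (n + Pi.single j 1)) * X j ℓ n := by
    rw [h2, div_mul_eq_mul_div, mul_div_assoc, mul_div_cancel_left₀ _ (hH j _)]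
  linear_combination h1 - h3 + H i (n + Pi.single i 1 + Pi.single j 1) * h4 -
    X j ℓ n * h5 - eA - eB
end
end

section
/- Let (ξ_1,…,ξ_N) be a tangent solution and (H_1,…,H_N) a Lamé solution. Then for all j ≠ k one has Δ_j(ξ_k·(T_k H_k)) = Δ_k(ξ_j·(T_j H_j)). (Hence the equations Δ_k Ω = ξ_k·(T_k H_k), k = 1,…,N, defining the potential Ω(ξ,H) are compatible.) -/
noncomputable section

/-- For a tangent solution `(ξ_i)` and a Lamé solution `(H_i)`, the one-form with
components `ξ_k·(T_k H_k)` is closed: `Δ_j(ξ_k·T_k H_k) = Δ_k(ξ_j·T_j H_j)` for `j ≠ k`,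
so the potential `Ω(ξ,H)` is well defined. -/
theorem statement_1 (N : ℕ) (hN : 2 ≤ N)
    (Q : Fin N → Fin N → (Fin N → ℤ) → ℝ)
    (ξ : Fin N → (Fin N → ℤ) → ℝ)
    (hξ : ∀ j k : Fin N, j ≠ k → Δ k (ξ j) = T k (Q j k) * ξ k)
    (H : Fin N → (Fin N → ℤ) → ℝ)
    (hH : ∀ i j : Fin N, i ≠ j → Δ i (H j) = Q i j * T i (H i)) :
    ∀ j k : Fin N, j ≠ k →
      Δ j (ξ k * T k (H k)) = Δ k (ξ j * T j (H j)) := by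
  intro j k hjk
  funext n
  have hcomm : n + Pi.single j 1 + Pi.single k 1 = n + Pi.single k 1 + Pi.single j 1 := by
    rw [add_right_comm]
  have hA := congrFun (hξ k j hjk.symm) n
  have hB := congrFun (hξ j k hjk) n
  have hC := congrFun (hH j k hjk) (n + Pi.single k 1)
  have hD := congrFun (hH k j hjk.symm) (n + Pi.single j 1)
  simp only [Δ, T, Pi.mul_apply] at *
  rw [← hcomm] at hC ⊢
  linear_combination H k (n + Pi.single j 1 + Pi.single k 1) * hA +
    ξ k n * hC - H j (n + Pi.single j 1 + Pi.single k 1) * hB - ξ j n * hD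
end
end

section
/- Let (X_1,…,X_N) be a tangent solution and (ζ_1,…,ζ_N) a Lamé solution. Then for all j ≠ k one has Δ_j(X_k·(T_k ζ_k)) = Δ_k(X_j·(T_j ζ_j)). (Hence the equations Δ_k Ω = X_k·(T_k ζ_k), k = 1,…,N, defining the potential Ω(X,ζ) are compatible.) -/
noncomputable section

/-- For a tangent solution `(X_i)` and a Lamé solution `(ζ_i)`, the one-form with
components `X_k·(T_k ζ_k)` is closed: `Δ_j(X_k·T_k ζ_k) = Δ_k(X_j·T_j ζ_j)` for `j ≠ k`,
so the potential `Ω(X,ζ)` is well defined. -/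
theorem statement_2 (N : ℕ) (hN : 2 ≤ N)
    (Q : Fin N → Fin N → (Fin N → ℤ) → ℝ)
    (X : Fin N → (Fin N → ℤ) → ℝ)
    (hX : ∀ j k : Fin N, j ≠ k → Δ k (X j) = T k (Q j k) * X k)
    (ζ : Fin N → (Fin N → ℤ) → ℝ)
    (hζ : ∀ i j : Fin N, i ≠ j → Δ i (ζ j) = Q i j * T i (ζ i)) :
    ∀ j k : Fin N, j ≠ k →
      Δ j (X k * T k (ζ k)) = Δ k (X j * T j (ζ j)) := by
  intro j k hjk
  funext n
  have h1 := congrFun (hX k j hjk.symm) n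
  have h2 := congrFun (hX j k hjk) n
  have h3 := congrFun (hζ j k hjk) (n + Pi.single k 1)
  have h4 := congrFun (hζ k j hjk.symm) (n + Pi.single j 1)
  have hcomm : n + Pi.single k 1 + Pi.single j 1 = n + Pi.single j 1 + Pi.single k 1 :=
    add_right_comm _ _ _
  simp only [Δ, T, Pi.mul_apply, hcomm] at h1 h2 h3 h4 ⊢
  linear_combination ζ k (n + Pi.single j 1 + Pi.single k 1) * h1 + X k n * h3 - ζ j (n + Pi.single j 1 + Pi.single k 1) * h2 - X j n * h4
end
end

section
/- Fix i ∈ {1,…,N}. Let (ξ_1,…,ξ_N) and (X_1,…,X_N) be tangent solutions, with ξ_i nowhere vanishing. Define the Levy-transformed data X_i[1] := (ξ_i·Δ_i X_i − (Δ_i ξ_i)·X_i)/ξ_i, X_k[1] := (ξ_i·X_k − ξ_k·X_i)/ξ_i for k ≠ i, and Q_{ik}[1] := (ξ_i·Δ_i Q_{ik} − Q_{ik}·Δ_i ξ_i)/ξ_i for k ≠ i. Then for every k ≠ i: Δ_k X_i[1] = (T_k Q_{ik}[1])·X_k[1]. -/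
noncomputable section

/-- Levy transformation in the `i`-th direction: the transformed tangent vector
`X_i[1] = (ξ_i Δ_i X_i − (Δ_i ξ_i) X_i)/ξ_i` satisfies, for every `k ≠ i`,
`Δ_k X_i[1] = (T_k Q_{ik}[1])·X_k[1]` with
`Q_{ik}[1] = (ξ_i Δ_i Q_{ik} − Q_{ik} Δ_i ξ_i)/ξ_i` and
`X_k[1] = (ξ_i X_k − ξ_k X_i)/ξ_i`. -/
theorem statement_3 (N : ℕ) (hN : 2 ≤ N)
    (Q : Fin N → Fin N → (Fin N → ℤ) → ℝ)
    (i : Fin N)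
    (ξ X : Fin N → (Fin N → ℤ) → ℝ)
    (hξ : ∀ j k : Fin N, j ≠ k → Δ k (ξ j) = T k (Q j k) * ξ k)
    (hX : ∀ j k : Fin N, j ≠ k → Δ k (X j) = T k (Q j k) * X k)
    (hξi : ∀ n : Fin N → ℤ, ξ i n ≠ 0) :
    ∀ k : Fin N, k ≠ i →
      Δ k ((ξ i * Δ i (X i) - Δ i (ξ i) * X i) / ξ i)
        = T k ((ξ i * Δ i (Q i k) - Q i k * Δ i (ξ i)) / ξ i)
          * ((ξ i * X k - ξ k * X i) / ξ i) := by

  intro k hk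
  have hik : i ≠ k := hk.symm
  funext n
  have hcomm : n + Pi.single k 1 + Pi.single i 1 = n + Pi.single i 1 + Pi.single k 1 := by
    simp [add_right_comm]
  have e1 := congrFun (hξ i k hik) n
  have e2 := congrFun (hξ i k hik) (n + Pi.single i 1)
  have e3 := congrFun (hX i k hik) n
  have e4 := congrFun (hX i k hik) (n + Pi.single i 1)
  have e5 := congrFun (hξ k i hk) n
  have e6 := congrFun (hX k i hk) n
  simp only [Δ, T, Pi.mul_apply, Pi.div_apply, Pi.sub_apply] at e1 e2 e3 e4 e5 e6 ⊢
  rw [hcomm]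
  have f1 : ξ i (n + Pi.single k 1) = Q i k (n + Pi.single k 1) * ξ k n + ξ i n := by
    linarith
  have f2 : ξ i (n + Pi.single i 1 + Pi.single k 1)
      = Q i k (n + Pi.single i 1 + Pi.single k 1) * ξ k (n + Pi.single i 1)
        + ξ i (n + Pi.single i 1) := by linarith
  have f3 : X i (n + Pi.single k 1) = Q i k (n + Pi.single k 1) * X k n + X i n := by
    linarith
  have f4 : X i (n + Pi.single i 1 + Pi.single k 1)
      = Q i k (n + Pi.single i 1 + Pi.single k 1) * X k (n + Pi.single i 1)
        + X i (n + Pi.single i 1) := by linarith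
  have f5 : ξ k (n + Pi.single i 1) = Q k i (n + Pi.single i 1) * ξ i n + ξ k n := by
    linarith
  have f6 : X k (n + Pi.single i 1) = Q k i (n + Pi.single i 1) * X i n + X k n := by
    linarith
  have hA := hξi n
  have hA2 := hξi (n + Pi.single k 1)
  rw [f1] at hA2
  rw [f2, f4, f5, f6, f1, f3]
  field_simp
  ring
end
end

section
/- Fix i ∈ {1,…,N}. Let (ξ_1,…,ξ_N) and (X_1,…,X_N) be tangent solutions, with ξ_i nowhere vanishing. Define X_i[1] := (ξ_i·Δ_i X_i − (Δ_i ξ_i)·X_i)/ξ_i, X_k[1] := (ξ_i·X_k − ξ_k·X_i)/ξ_i for k ≠ i, and Q_{ki}[1] := −ξ_k/ξ_i for k ≠ i. Then for every k ≠ i: Δ_i X_k[1] = (T_i Q_{ki}[1])·X_i[1]. -/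
noncomputable section

/-- Levy transformation in the `i`-th direction: for every `k ≠ i`,
`Δ_i X_k[1] = (T_i Q_{ki}[1])·X_i[1]` with `Q_{ki}[1] = −ξ_k/ξ_i`,
`X_k[1] = (ξ_i X_k − ξ_k X_i)/ξ_i` and `X_i[1] = (ξ_i Δ_i X_i − (Δ_i ξ_i) X_i)/ξ_i`. -/
theorem statement_4 (N : ℕ) (hN : 2 ≤ N)
    (Q : Fin N → Fin N → (Fin N → ℤ) → ℝ)
    (i : Fin N)
    (ξ X : Fin N → (Fin N → ℤ) → ℝ)
    (hξ : ∀ j k : Fin N, j ≠ k → Δ k (ξ j) = T k (Q j k) * ξ k)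
    (hX : ∀ j k : Fin N, j ≠ k → Δ k (X j) = T k (Q j k) * X k)
    (hξi : ∀ n : Fin N → ℤ, ξ i n ≠ 0) :
    ∀ k : Fin N, k ≠ i →
      Δ i ((ξ i * X k - ξ k * X i) / ξ i)
        = T i (-(ξ k / ξ i))
          * ((ξ i * Δ i (X i) - Δ i (ξ i) * X i) / ξ i) := by
  intro k hk
  funext n
  have h1 := congrFun (hξ k i hk) n
  have h2 := congrFun (hX k i hk) n
  simp only [Δ, T, Pi.mul_apply] at h1 h2
  have hi1 := hξi n
  have hi2 := hξi (n + Pi.single i 1)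
  simp only [Δ, T, Pi.mul_apply, Pi.div_apply, Pi.sub_apply, Pi.neg_apply]
  field_simp
  linear_combination (ξ i (n + Pi.single i 1) * ξ i n) * h2 - (ξ i (n + Pi.single i 1) * X i n) * h1
end
end

section
/- Fix i ∈ {1,…,N} (N ≥ 3). Let (ξ_1,…,ξ_N) and (X_1,…,X_N) be tangent solutions, with ξ_i nowhere vanishing. Define X_k[1] := (ξ_i·X_k − ξ_k·X_i)/ξ_i for k ≠ i, and Q_{kl}[1] := (ξ_i·Q_{kl} − ξ_k·Q_{il})/ξ_i for k,l ≠ i with k ≠ l. Then for all k,l ∈ {1,…,N} with k,l ≠ i and k ≠ l: Δ_l X_k[1] = (T_l Q_{kl}[1])·X_l[1]. -/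
noncomputable section

lemma key (A K L Xi Xl Xk q r A' K' Xi' Xk' : ℝ) (hA : A ≠ 0) (hA' : A' ≠ 0)
    (h1 : A' - A = r * L) (h2 : K' - K = q * L) (h3 : Xi' - Xi = r * Xl)
    (h4 : Xk' - Xk = q * Xl) :
    (A' * Xk' - K' * Xi') / A' - (A * Xk - K * Xi) / A
      = ((A' * q - K' * r) / A') * ((A * Xl - L * Xi) / A) := by
  have eA : A' = A + r * L := by linarith
  have eK : K' = K + q * L := by linarith
  have eXi : Xi' = Xi + r * Xl := by linarith
  have eXk : Xk' = Xk + q * Xl := by linarith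
  subst eA eK eXi eXk
  field_simp
  ring

/-- Levy transformation in the `i`-th direction (`N ≥ 3`): for `k, l ≠ i`, `k ≠ l`,
`Δ_l X_k[1] = (T_l Q_{kl}[1])·X_l[1]` with `Q_{kl}[1] = (ξ_i Q_{kl} − ξ_k Q_{il})/ξ_i`
and `X_k[1] = (ξ_i X_k − ξ_k X_i)/ξ_i`. -/
theorem statement_5 (N : ℕ) (hN : 3 ≤ N)
    (Q : Fin N → Fin N → (Fin N → ℤ) → ℝ)
    (i : Fin N)
    (ξ X : Fin N → (Fin N → ℤ) → ℝ)
    (hξ : ∀ j k : Fin N, j ≠ k → Δ k (ξ j) = T k (Q j k) * ξ k)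
    (hX : ∀ j k : Fin N, j ≠ k → Δ k (X j) = T k (Q j k) * X k)
    (hξi : ∀ n : Fin N → ℤ, ξ i n ≠ 0) :
    ∀ k l : Fin N, k ≠ i → l ≠ i → k ≠ l →
      Δ l ((ξ i * X k - ξ k * X i) / ξ i)
        = T l ((ξ i * Q k l - ξ k * Q i l) / ξ i)
          * ((ξ i * X l - ξ l * X i) / ξ i) := by
  intro k l hki hli hkl
  funext n
  have h1 := congrFun (hξ i l (Ne.symm hli)) n
  have h2 := congrFun (hξ k l hkl) n
  have h3 := congrFun (hX i l (Ne.symm hli)) n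
  have h4 := congrFun (hX k l hkl) n
  simp only [Δ, T, Pi.mul_apply] at h1 h2 h3 h4
  simp only [Δ, T, Pi.div_apply, Pi.mul_apply, Pi.sub_apply]
  exact key _ _ _ _ _ _ _ _ _ _ _ _ (hξi n) (hξi (n + Pi.single l 1)) h1 h2 h3 h4
end
end

section
/- Fix i ∈ {1,…,N}. Let (ξ_1,…,ξ_N) be a tangent solution with ξ_i nowhere vanishing, (H_1,…,H_N) a Lamé solution, and Ω : ℤ^N → ℝ a potential satisfying Δ_k Ω = ξ_k·(T_k H_k) for all k = 1,…,N. Define H_i[1] := −Ω/ξ_i, H_k[1] := H_k − Q_{ik}·Ω/ξ_i for k ≠ i, and Q_{ki}[1] := −ξ_k/ξ_i for k ≠ i. Then for every k ≠ i: Δ_k H_i[1] = Q_{ki}[1]·(T_k H_k[1]). -/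
noncomputable section

section DiscreteCalculus

variable {N : ℕ} (j : Fin N)

@[simp] lemma T_apply (f : (Fin N → ℤ) → ℝ) (n : Fin N → ℤ) :
    T j f n = f (n + Pi.single j 1) := rfl

@[simp] lemma Δ_apply (f : (Fin N → ℤ) → ℝ) (n : Fin N → ℤ) :
    Δ j f n = f (n + Pi.single j 1) - f n := rfl

lemma T_eq_add_Δ (f : (Fin N → ℤ) → ℝ) : T j f = f + Δ j f := by
  ext n
  simp

lemma Δ_neg (f : (Fin N → ℤ) → ℝ) : Δ j (-f) = -Δ j f := by
  ext n
  simp only [Δ_apply, Pi.neg_apply]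
  ring

lemma Δ_div (f : (Fin N → ℤ) → ℝ) {g : (Fin N → ℤ) → ℝ} (hg : ∀ n, g n ≠ 0) :
    Δ j (f / g) = (Δ j f * g - f * Δ j g) / (g * T j g) := by
  ext n
  have hgn := hg n
  have hgT := hg (n + Pi.single j 1)
  simp only [Δ_apply, T_apply, Pi.div_apply, Pi.mul_apply, Pi.sub_apply]
  field_simp
  ring

end DiscreteCalculus

theorem statement_6_general (N : ℕ)
    (Q : Fin N → Fin N → (Fin N → ℤ) → ℝ)
    (i : Fin N)
    (ξ H : Fin N → (Fin N → ℤ) → ℝ)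
    (hξ : ∀ j k : Fin N, j ≠ k → Δ k (ξ j) = T k (Q j k) * ξ k)
    (hξi : ∀ n : Fin N → ℤ, ξ i n ≠ 0)
    (Ω : (Fin N → ℤ) → ℝ)
    (hΩ : ∀ k : Fin N, Δ k Ω = ξ k * T k (H k)) :
    ∀ k : Fin N, k ≠ i →
      Δ k (-(Ω / ξ i))
        = (-(ξ k / ξ i)) * T k (H k - Q i k * Ω / ξ i) := by
  intro k hk
  have hΩ_shift : T k Ω = Ω + ξ k * T k (H k) := by rw [T_eq_add_Δ, hΩ]
  have hξ_shift : T k (ξ i) = ξ i + T k (Q i k) * ξ k := by rw [T_eq_add_Δ, hξ i k hk.symm]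
  rw [Δ_neg, Δ_div k Ω hξi, hΩ, hξ i k hk.symm]
  ext n
  have hΩn := congrFun hΩ_shift n
  have hξn := congrFun hξ_shift n
  have hξin := hξi n
  have hξiT := hξi (n + Pi.single k 1)
  simp only [T_apply, Pi.add_apply, Pi.mul_apply] at hΩn hξn
  simp only [T_apply, Pi.neg_apply, Pi.div_apply, Pi.mul_apply, Pi.sub_apply]
  rw [hΩn]
  field_simp
  rw [hξn]
  ring

/-- Levy transformation in the `i`-th direction, Lamé coefficients: for every `k ≠ i`,
`Δ_k H_i[1] = Q_{ki}[1]·(T_k H_k[1])` with `H_i[1] = −Ω/ξ_i`,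
`H_k[1] = H_k − Q_{ik}·Ω/ξ_i` and `Q_{ki}[1] = −ξ_k/ξ_i`, where `Ω` is the potential
with `Δ_k Ω = ξ_k·(T_k H_k)`. -/
theorem statement_6 (N : ℕ) (hN : 2 ≤ N)
    (Q : Fin N → Fin N → (Fin N → ℤ) → ℝ)
    (i : Fin N)
    (ξ H : Fin N → (Fin N → ℤ) → ℝ)
    (hξ : ∀ j k : Fin N, j ≠ k → Δ k (ξ j) = T k (Q j k) * ξ k)
    (hH : ∀ j k : Fin N, j ≠ k → Δ j (H k) = Q j k * T j (H j))
    (hξi : ∀ n : Fin N → ℤ, ξ i n ≠ 0)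
    (Ω : (Fin N → ℤ) → ℝ)
    (hΩ : ∀ k : Fin N, Δ k Ω = ξ k * T k (H k)) :
    ∀ k : Fin N, k ≠ i →
      Δ k (-(Ω / ξ i))
        = (-(ξ k / ξ i)) * T k (H k - Q i k * Ω / ξ i) :=
  statement_6_general N Q i ξ H hξ hξi Ω hΩ
end
end

section
/- Fix i ∈ {1,…,N}. Let (ξ_1,…,ξ_N) be a tangent solution with ξ_i nowhere vanishing, (X_1,…,X_N) an ℝ^D-valued tangent solution, (H_1,…,H_N) a Lamé solution, Ω : ℤ^N → ℝ a potential with Δ_m Ω = ξ_m·(T_m H_m) for all m, and x : ℤ^N → ℝ^D with Δ_m x = (T_m H_m)·X_m for all m. Define the Levy transform x[1] := x − (Ω/ξ_i)·X_i, together with X_i[1] := (ξ_i·Δ_i X_i − (Δ_i ξ_i)·X_i)/ξ_i, X_k[1] := (ξ_i·X_k − ξ_k·X_i)/ξ_i for k ≠ i, H_i[1] := −Ω/ξ_i, and H_k[1] := H_k − Q_{ik}·Ω/ξ_i for k ≠ i. Then for every j = 1,…,N: Δ_j x[1] = (T_j H_j[1])·X_j[1]. -/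
noncomputable section

/-- Full Levy transformation in the `i`-th direction: the transformed lattice
`x[1] = x − (Ω/ξ_i)·X_i` satisfies `Δ_j x[1] = (T_j H_j[1])·X_j[1]` for every
direction `j`, where `X_i[1] = (ξ_i Δ_i X_i − (Δ_i ξ_i) X_i)/ξ_i`,
`X_k[1] = (ξ_i X_k − ξ_k X_i)/ξ_i`, `H_i[1] = −Ω/ξ_i` and
`H_k[1] = H_k − Q_{ik}·Ω/ξ_i` (`k ≠ i`). -/
theorem statement_9 (N D : ℕ) (hN : 2 ≤ N) (hD : 1 ≤ D)
    (Q : Fin N → Fin N → (Fin N → ℤ) → ℝ)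
    (i : Fin N)
    (ξ : Fin N → (Fin N → ℤ) → ℝ)
    (hξ : ∀ j k : Fin N, j ≠ k → Δ k (ξ j) = T k (Q j k) * ξ k)
    (hξi : ∀ n : Fin N → ℤ, ξ i n ≠ 0)
    (X : Fin N → Fin D → (Fin N → ℤ) → ℝ)
    (hX : ∀ (ℓ : Fin D) (j k : Fin N), j ≠ k → Δ k (X j ℓ) = T k (Q j k) * X k ℓ)
    (H : Fin N → (Fin N → ℤ) → ℝ)
    (hH : ∀ j k : Fin N, j ≠ k → Δ j (H k) = Q j k * T j (H j))
    (Ω : (Fin N → ℤ) → ℝ)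
    (hΩ : ∀ m : Fin N, Δ m Ω = ξ m * T m (H m))
    (x : Fin D → (Fin N → ℤ) → ℝ)
    (hx : ∀ (m : Fin N) (ℓ : Fin D), Δ m (x ℓ) = T m (H m) * X m ℓ)
    (X1 : Fin N → Fin D → (Fin N → ℤ) → ℝ)
    (hX1i : ∀ ℓ : Fin D, X1 i ℓ = (ξ i * Δ i (X i ℓ) - Δ i (ξ i) * X i ℓ) / ξ i)
    (hX1k : ∀ k : Fin N, k ≠ i → ∀ ℓ : Fin D, X1 k ℓ = (ξ i * X k ℓ - ξ k * X i ℓ) / ξ i)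
    (H1 : Fin N → (Fin N → ℤ) → ℝ)
    (hH1i : H1 i = -(Ω / ξ i))
    (hH1k : ∀ k : Fin N, k ≠ i → H1 k = H k - Q i k * Ω / ξ i) :
    ∀ (j : Fin N) (ℓ : Fin D),
      Δ j (x ℓ - Ω / ξ i * X i ℓ) = T j (H1 j) * X1 j ℓ := by
  intro j ℓ
  funext n
  have hin := hξi n
  have him := hξi (n + Pi.single j 1)
  by_cases hji : j = i
  · subst hji
    have h1 := congrFun (hΩ j) n
    have h2 := congrFun (hx j ℓ) n
    simp only [Δ, T, Pi.mul_apply, Pi.sub_apply, Pi.div_apply, Pi.neg_apply,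
      hX1i, hH1i] at h1 h2 ⊢
    field_simp
    linear_combination ξ j (n + Pi.single j 1) * ξ j n * h2 -
      ξ j (n + Pi.single j 1) * X j ℓ n * h1
  · have h1 := congrFun (hΩ j) n
    have h2 := congrFun (hx j ℓ) n
    have h3 := congrFun (hξ i j (Ne.symm hji)) n
    have h4 := congrFun (hX ℓ i j (Ne.symm hji)) n
    simp only [Δ, T, Pi.mul_apply, Pi.sub_apply, Pi.div_apply,
      hX1k j hji, hH1k j hji] at h1 h2 h3 h4 ⊢
    field_simp
    linear_combination ξ i (n + Pi.single j 1) * ξ i n * h2 -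
      Ω (n + Pi.single j 1) * ξ i n * h4 + Ω n * X i ℓ n * h3 -
      X i ℓ n * ξ i n * h1 + H j (n + Pi.single j 1) * ξ j n * X i ℓ n * h3 -
      Q i j (n + Pi.single j 1) * ξ j n * X i ℓ n * h1
end
end

section
/- Fix i ≠ k in {1,…,N} and an integer p ≥ 0. Then there exist functions c_0, c_1, …, c_{p−1}, c : ℤ^N → ℝ, depending only on the rotation coefficients Q (and on i, k, p) and not on the particular solution, such that EVERY tangent solution (ξ_1,…,ξ_N) satisfies T_k(Δ_i^p ξ_i) = Δ_i^p ξ_i + Σ_{q=0}^{p−1} c_q·(Δ_i^q ξ_i) + c·ξ_k. (Here Δ_i^p denotes the p-th iterate of Δ_i.) -/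
noncomputable section

lemma Δ_eq {N : ℕ} (j : Fin N) (f : (Fin N → ℤ) → ℝ) : Δ j f = T j f - f := rfl

lemma T_mul {N : ℕ} (j : Fin N) (f g : (Fin N → ℤ) → ℝ) : T j (f * g) = T j f * T j g := rfl

lemma T_add {N : ℕ} (j : Fin N) (f g : (Fin N → ℤ) → ℝ) : T j (f + g) = T j f + T j g := rfl

lemma T_sub {N : ℕ} (j : Fin N) (f g : (Fin N → ℤ) → ℝ) : T j (f - g) = T j f - T j g := rfl

lemma TT_comm {N : ℕ} (j l : Fin N) (f : (Fin N → ℤ) → ℝ) : T j (T l f) = T l (T j f) := by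
  funext n
  simp only [T]
  congr 1
  exact add_right_comm n _ _

lemma TΔ_comm {N : ℕ} (j l : Fin N) (f : (Fin N → ℤ) → ℝ) : T l (Δ j f) = Δ j (T l f) := by
  simp only [Δ_eq, T_sub, TT_comm]

lemma Δ_add {N : ℕ} (j : Fin N) (f g : (Fin N → ℤ) → ℝ) : Δ j (f + g) = Δ j f + Δ j g := by
  simp only [Δ_eq, T_add]; ring

lemma Δ_mul {N : ℕ} (j : Fin N) (f g : (Fin N → ℤ) → ℝ) :
    Δ j (f * g) = T j f * Δ j g + Δ j f * g := by
  simp only [Δ_eq, T_mul]; ring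

lemma Δ_sum {N : ℕ} (j : Fin N) (s : Finset ℕ) (f : ℕ → (Fin N → ℤ) → ℝ) :
    Δ j (∑ q ∈ s, f q) = ∑ q ∈ s, Δ j (f q) := by
  funext n
  simp [Δ, Finset.sum_apply, Finset.sum_sub_distrib]

lemma Δ_zero {N : ℕ} (j : Fin N) : Δ j (0 : (Fin N → ℤ) → ℝ) = 0 := by
  funext n; simp [Δ]

/-- For `i ≠ k` and `p ≥ 0`, there are functions `c_0, …, c_{p−1}, c`, depending only
on the rotation coefficients, such that every tangent solution `(ξ_j)` satisfies
`T_k(Δ_i^p ξ_i) = Δ_i^p ξ_i + Σ_{q<p} c_q·Δ_i^q ξ_i + c·ξ_k`. -/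
theorem statement_14 (N : ℕ) (hN : 2 ≤ N)
    (Q : Fin N → Fin N → (Fin N → ℤ) → ℝ)
    (i k : Fin N) (hik : i ≠ k) (p : ℕ) :
    ∃ (c : ℕ → (Fin N → ℤ) → ℝ) (cK : (Fin N → ℤ) → ℝ),
      ∀ ξ : Fin N → (Fin N → ℤ) → ℝ,
        (∀ j l : Fin N, j ≠ l → Δ l (ξ j) = T l (Q j l) * ξ l) →
        T k ((Δ i)^[p] (ξ i))
          = (Δ i)^[p] (ξ i) + (∑ q ∈ Finset.range p, c q * (Δ i)^[q] (ξ i)) + cK * ξ k := by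
  induction p with
  | zero =>
    refine ⟨fun _ => 0, T k (Q i k), ?_⟩
    intro ξ hξ
    simp only [Function.iterate_zero, id, Finset.range_zero, Finset.sum_empty, add_zero]
    rw [← hξ i k hik, Δ_eq]
    ring
  | succ p ih =>
    obtain ⟨c, cK, h⟩ := ih
    set c'' : ℕ → (Fin N → ℤ) → ℝ := fun q => if q < p then c q else 0 with hc''
    refine ⟨fun q => Δ i (c'' q) + T i (Nat.casesOn q (cK * Q k i) c''), Δ i cK, ?_⟩
    intro ξ hξ
    have hg := h ξ hξ
    have hsum : (∑ q ∈ Finset.range p, c q * (Δ i)^[q] (ξ i))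
        = ∑ q ∈ Finset.range p, c'' q * (Δ i)^[q] (ξ i) := by
      refine Finset.sum_congr rfl fun q hq => ?_
      rw [hc'']
      simp [Finset.mem_range.mp hq]
    rw [hsum] at hg
    -- LHS
    rw [Function.iterate_succ_apply', TΔ_comm, hg]
    rw [Δ_add, Δ_add, Δ_sum, Δ_mul i cK (ξ k), hξ k i hik.symm]
    set D : ℕ → (Fin N → ℤ) → ℝ := fun q => (Δ i)^[q] (ξ i) with hD
    have hD0 : D 0 = ξ i := by rw [hD]; simp
    have hDs : ∀ q, Δ i (D q) = D (q + 1) := by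
      intro q; rw [hD]; simp [Function.iterate_succ_apply']
    have key : (∑ q ∈ Finset.range (p + 1),
            (Δ i (c'' q) + T i (Nat.casesOn q (cK * Q k i) c'')) * D q)
        = (∑ q ∈ Finset.range p, Δ i (c'' q * D q))
          + T i cK * (T i (Q k i) * ξ i) := by
      have e1 : (∑ q ∈ Finset.range (p + 1),
            (Δ i (c'' q) + T i (Nat.casesOn q (cK * Q k i) c'')) * D q)
          = (∑ q ∈ Finset.range (p + 1), Δ i (c'' q) * D q)
            + ∑ q ∈ Finset.range (p + 1),
                T i (Nat.casesOn q (cK * Q k i) c'') * D q := by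
        rw [← Finset.sum_add_distrib]
        exact Finset.sum_congr rfl fun q _ => by ring
      rw [e1]
      have e2 : (∑ q ∈ Finset.range (p + 1), Δ i (c'' q) * D q)
          = ∑ q ∈ Finset.range p, Δ i (c'' q) * D q := by
        rw [Finset.sum_range_succ]
        have : Δ i (c'' p) = 0 := by rw [hc'']; simp [Δ_zero]
        rw [this, zero_mul, add_zero]
      have e3 : (∑ q ∈ Finset.range (p + 1),
            T i (Nat.casesOn q (cK * Q k i) c'') * D q)
          = (∑ q ∈ Finset.range p, T i (c'' q) * D (q + 1))
            + T i (cK * Q k i) * ξ i := by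
        rw [Finset.sum_range_succ']
        simp only [hD0]
        rfl
      rw [e2, e3]
      have e4 : (∑ q ∈ Finset.range p, Δ i (c'' q * D q))
          = ∑ q ∈ Finset.range p, (T i (c'' q) * D (q + 1) + Δ i (c'' q) * D q) := by
        refine Finset.sum_congr rfl fun q _ => ?_
        rw [Δ_mul, hDs]
      rw [e4, Finset.sum_add_distrib, T_mul]
      ring
    simp only [hD] at key
    rw [key]
    ring
end
end

section
/- Let ξ^1, …, ξ^M be tangent solutions, each ξ^a = (ξ^a_1,…,ξ^a_N), and let 𝒲 be the associated discrete multi-Wroński matrix for the partition M = m_1 + … + m_N. Fix k ∈ {1,…,N} and let 𝒲̃ be the M×M matrix obtained from 𝒲 by replacing the last row of the k-th block, (Δ_k^{m_k−1} ξ^1_k, …, Δ_k^{m_k−1} ξ^M_k), by (T_k^{−1} Δ_k^{m_k} ξ^1_k, …, T_k^{−1} Δ_k^{m_k} ξ^M_k). Then Δ_k(det 𝒲) = T_k(det 𝒲̃), i.e., for every n ∈ ℤ^N, det 𝒲(n + e_k) − det 𝒲(n) = det 𝒲̃(n + e_k). -/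
/-! Shifting `𝒲` by `e_k` adds row `(k, p + 1)` to row `(k, p)`, and, by the tangent equations
and the discrete Leibniz rule, adds to row `(j, p)`, `j ≠ k`, a combination of row `(k, 0)` and
the rows `(j, q)`, `q < p`, with coefficients independent of the solution. Expanding
`det 𝒲(n + e_k)` along the last row of block `k`, which is row `(k, m_k − 1)` of `𝒲(n)` plus
`Δ_k^{m_k} ξ_k(n)`, the first summand is `det 𝒲(n)` after a unitriangular row operation and the
second is `det 𝒲̃(n + e_k)`. -/

noncomputable section

/-- The discrete multi-Wroński matrix `𝒲(n)` of the `M = m_1 + ⋯ + m_N` tangent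
solutions `ξ^a` (`a` ranges over the canonical `M`-element index set
`Σ j : Fin N, Fin (m j)`): its row `(j, p)` is `(Δ_j^p ξ^a_j(n))_a`. -/
def Wmat {N : ℕ} (m : Fin N → ℕ)
    (ξ : (Σ j : Fin N, Fin (m j)) → Fin N → (Fin N → ℤ) → ℝ) (n : Fin N → ℤ) :
    Matrix (Σ j : Fin N, Fin (m j)) (Σ j : Fin N, Fin (m j)) ℝ :=
  Matrix.of fun r a => (Δ r.1)^[(r.2 : ℕ)] (ξ a r.1) n

/-- The index `(k, m_k − 1)` of the last row of the `k`-th block. -/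
def lastRow {N : ℕ} (m : Fin N → ℕ) (k : Fin N) (h : 0 < m k) :
    Σ j : Fin N, Fin (m j) :=
  ⟨k, ⟨m k - 1, Nat.sub_lt h Nat.one_pos⟩⟩

namespace Matrix

variable {ι R α : Type*} [Fintype ι] [DecidableEq ι] [CommRing R] [LinearOrder α]

theorem det_one_add_eq_one_of_strictLower (f : ι → α) {C : Matrix ι ι R}
    (hC : ∀ r s, f r ≤ f s → C r s = 0) : (1 + C).det = 1 := by
  have htri : (1 + C).BlockTriangular (OrderDual.toDual ∘ f) := by
    intro r s hrs
    have hne : r ≠ s := by rintro rfl; exact lt_irrefl _ hrs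
    simp [one_apply_ne hne, hC r s hrs.le]
  rw [htri.det]
  refine Finset.prod_eq_one fun a _ => ?_
  convert det_one (R := R) (n := {i // (OrderDual.toDual ∘ f) i = a})
  ext i j
  have hij : f i = f j := by simpa using i.2.trans j.2.symm
  simp [toSquareBlock_def, hC _ _ hij.le, one_apply, Subtype.ext_iff]

theorem det_eq_of_sub_mem_span (f : ι → α) {A B : Matrix ι ι R}
    (h : ∀ r, A r - B r ∈ Submodule.span R (B '' {s | f s < f r})) : A.det = B.det := by
  choose l hl hlB using fun r => (Finsupp.mem_span_image_iff_linearCombination R).1 (h r)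
  have hA : A = (1 + of fun r s => l r s) * B := by
    ext r a
    have hr : (l r).sum (fun s c => c • B s) = A r - B r :=
      (Finsupp.linearCombination_apply R (l r)).symm.trans (hlB r)
    rw [Finsupp.sum_fintype _ _ (by simp)] at hr
    have hra := congrFun hr a
    simp only [Finset.sum_apply, Pi.smul_apply, smul_eq_mul, Pi.sub_apply] at hra
    simp only [add_mul, add_apply, mul_apply, of_apply, Finset.sum_add_distrib]
    rw [hra, ← mul_apply, one_mul, add_sub_cancel]
  rw [hA, det_mul, det_one_add_eq_one_of_strictLower f, one_mul]
  intro r s hrs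
  by_contra hne
  exact not_lt_of_ge hrs (hl r (by simpa using hne))

end Matrix

section Difference

variable {N : ℕ}

theorem Δ_comm (j k : Fin N) (f : (Fin N → ℤ) → ℝ) : Δ j (Δ k f) = Δ k (Δ j f) := by
  funext n
  simp only [Δ, add_right_comm n]
  ring

theorem iterate_Δ_apply_add_single (k : Fin N) (p : ℕ) (f : (Fin N → ℤ) → ℝ)
    (n : Fin N → ℤ) :
    (Δ k)^[p] f (n + Pi.single k 1) = (Δ k)^[p] f n + (Δ k)^[p + 1] f n := by
  rw [Function.iterate_succ_apply', Δ, add_sub_cancel]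

/-- Membership in an `ℝ`-span of rows indexed by `a` makes the Leibniz coefficients, which are
functions of `n`, independent of the solution `a`. -/
theorem iterate_Δ_mul_mem_span {α : Type*} (j : Fin N) (w g : (Fin N → ℤ) → ℝ)
    {η ζ : α → (Fin N → ℤ) → ℝ} (hη : ∀ a, Δ j (η a) = g * ζ a) (p : ℕ) (n : Fin N → ℤ) :
    (fun a => (Δ j)^[p] (w * η a) n) ∈ Submodule.span ℝ
      (insert (fun a => η a n) ((fun q a => (Δ j)^[q] (ζ a) n) '' Set.Iio p)) := by
  induction p generalizing n with
  | zero =>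
    exact Submodule.smul_mem _ (w n) (Submodule.subset_span (Set.mem_insert _ _))
  | succ p ih =>
    have hshift : Submodule.span ℝ (insert (fun a => η a (n + Pi.single j 1))
        ((fun q a => (Δ j)^[q] (ζ a) (n + Pi.single j 1)) '' Set.Iio p)) ≤
        Submodule.span ℝ
          (insert (fun a => η a n) ((fun q a => (Δ j)^[q] (ζ a) n) '' Set.Iio (p + 1))) := by
      rw [Submodule.span_le]
      rintro _ (rfl | ⟨q, hq, rfl⟩)
      · have hη_shift : (fun a => η a (n + Pi.single j 1))
            = (fun a => η a n) + g n • fun a => (Δ j)^[0] (ζ a) n := by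
          funext a
          rw [Pi.add_apply, ← sub_eq_iff_eq_add']
          exact congrFun (hη a) n
        rw [hη_shift]
        exact add_mem (Submodule.subset_span (Set.mem_insert _ _)) (Submodule.smul_mem _ _
          (Submodule.subset_span (Set.mem_insert_of_mem _ ⟨0, by simp, rfl⟩)))
      · have hζ_shift : (fun a => (Δ j)^[q] (ζ a) (n + Pi.single j 1))
            = (fun a => (Δ j)^[q] (ζ a) n) + fun a => (Δ j)^[q + 1] (ζ a) n := by
          funext a
          exact iterate_Δ_apply_add_single j q (ζ a) n
        rw [Set.mem_Iio] at hq
        dsimp only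
        rw [SetLike.mem_coe, hζ_shift]
        exact add_mem
          (Submodule.subset_span (Set.mem_insert_of_mem _ ⟨q, by grind, rfl⟩))
          (Submodule.subset_span (Set.mem_insert_of_mem _ ⟨q + 1, by grind, rfl⟩))
    have hstep : (fun a => (Δ j)^[p + 1] (w * η a) n)
        = (fun a => (Δ j)^[p] (w * η a) (n + Pi.single j 1))
          - fun a => (Δ j)^[p] (w * η a) n := by
      funext a
      simp only [Function.iterate_succ_apply', Pi.sub_apply, Δ]
    rw [hstep]
    exact sub_mem (hshift (ih _)) (Submodule.span_mono
      (Set.insert_subset_insert (Set.image_mono (Set.Iio_subset_Iio p.le_succ))) (ih n))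

end Difference

section Wronskian

/-- Row `(k, p)` is reduced against `(k, p + 1)`, and row `(j, p)`, `j ≠ k`, against `(k, 0)` and
the `(j, q)` with `q < p`: each against rows of smaller order. -/
def eliminationOrder {N : ℕ} (m : Fin N → ℕ) (k : Fin N) (r : Σ j : Fin N, Fin (m j)) : ℤ :=
  if r.1 = k then -(r.2 : ℤ) else r.2 + 1

variable {N : ℕ} {m : Fin N → ℕ} {ξ : (Σ j : Fin N, Fin (m j)) → Fin N → (Fin N → ℤ) → ℝ}

theorem Wmat_add_single_apply_self (k : Fin N) (p : Fin (m k)) (n : Fin N → ℤ) :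
    Wmat m ξ (n + Pi.single k 1) ⟨k, p⟩
      = Wmat m ξ n ⟨k, p⟩ + fun a => (Δ k)^[p + 1] (ξ a k) n := by
  funext a
  exact iterate_Δ_apply_add_single k p (ξ a k) n

theorem Wmat_add_single_sub_mem_span (Q : Fin N → Fin N → (Fin N → ℤ) → ℝ)
    (hξ : ∀ a, ∀ j k : Fin N, j ≠ k → Δ k (ξ a j) = T k (Q j k) * ξ a k)
    {k : Fin N} (hk : 0 < m k) (n : Fin N → ℤ) {r : Σ j : Fin N, Fin (m j)}
    (hr : r ≠ lastRow m k hk) :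
    Wmat m ξ (n + Pi.single k 1) r - Wmat m ξ n r ∈ Submodule.span ℝ
      (Wmat m ξ n '' {s | eliminationOrder m k s < eliminationOrder m k r}) := by
  obtain ⟨j, p⟩ := r
  by_cases hjk : j = k
  · subst hjk
    have hp : (p : ℕ) + 1 < m j := by
      have : (p : ℕ) ≠ m j - 1 := fun h => hr (by simp [lastRow, ← h])
      omega
    rw [Wmat_add_single_apply_self, add_sub_cancel_left]
    exact Submodule.subset_span ⟨⟨j, ⟨p + 1, hp⟩⟩, by simp [eliminationOrder], rfl⟩
  · have hdiff : Wmat m ξ (n + Pi.single k 1) ⟨j, p⟩ - Wmat m ξ n ⟨j, p⟩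
        = fun a => (Δ j)^[p] (T k (Q j k) * ξ a k) n := by
      funext a
      change Δ k ((Δ j)^[p] (ξ a j)) n = _
      have hcomm : Function.Commute (Δ k) (Δ j) := Δ_comm k j
      rw [hcomm.iterate_right p (ξ a j), hξ a j k hjk]
    rw [hdiff]
    refine Submodule.span_mono ?_ (iterate_Δ_mul_mem_span j (T k (Q j k)) (T j (Q k j))
      (fun a => hξ a k j (Ne.symm hjk)) p n)
    rintro _ (rfl | ⟨q, hq, rfl⟩)
    · exact ⟨⟨k, ⟨0, hk⟩⟩, by simp [eliminationOrder, hjk], rfl⟩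
    · exact ⟨⟨j, ⟨q, hq.trans p.isLt⟩⟩, by simp [eliminationOrder, hjk]; exact hq, rfl⟩

end Wronskian

theorem statement_15_general (N : ℕ)
    (Q : Fin N → Fin N → (Fin N → ℤ) → ℝ)
    (m : Fin N → ℕ) (hm : ∀ j, 0 < m j)
    (ξ : (Σ j : Fin N, Fin (m j)) → Fin N → (Fin N → ℤ) → ℝ)
    (hξ : ∀ a, ∀ j k : Fin N, j ≠ k → Δ k (ξ a j) = T k (Q j k) * ξ a k)
    (k : Fin N) :
    ∀ n : Fin N → ℤ,
      (Wmat m ξ (n + Pi.single k 1)).det - (Wmat m ξ n).det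
        = ((Wmat m ξ (n + Pi.single k 1)).updateRow (lastRow m k (hm k))
            (fun a => (Δ k)^[m k] (ξ a k) (n + Pi.single k 1 - Pi.single k 1))).det := by
  intro n
  rw [add_sub_cancel_right]
  set L := lastRow m k (hm k)
  set W := Wmat m ξ (n + Pi.single k 1)
  set B := Wmat m ξ n
  have hL : W L = B L + fun a => (Δ k)^[m k] (ξ a k) n := by
    have hshift := Wmat_add_single_apply_self (ξ := ξ) k L.2 n
    rwa [show (L.2 : ℕ) + 1 = m k from Nat.sub_add_cancel (hm k)] at hshift
  have hreduce : (W.updateRow L (B L)).det = B.det := by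
    refine Matrix.det_eq_of_sub_mem_span (eliminationOrder m k) fun r => ?_
    rcases eq_or_ne r L with rfl | hr
    · simp
    · rw [Matrix.updateRow_ne hr]
      exact Wmat_add_single_sub_mem_span Q hξ (hm k) n hr
  calc W.det - B.det
      = (W.updateRow L (B L + fun a => (Δ k)^[m k] (ξ a k) n)).det - B.det := by
        rw [← hL, Matrix.updateRow_eq_self]
    _ = _ := by rw [Matrix.det_updateRow_add, hreduce, add_sub_cancel_left]

/-- Lemma 1, equation (9): `Δ_k(det 𝒲) = T_k(det 𝒲̃)`, where `𝒲̃` is obtained from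
`𝒲` by replacing the last row of the `k`-th block by `T_k^{−1} Δ_k^{m_k} ξ_k`. -/
theorem statement_15 (N : ℕ) (hN : 2 ≤ N)
    (Q : Fin N → Fin N → (Fin N → ℤ) → ℝ)
    (m : Fin N → ℕ) (hm : ∀ j, 0 < m j)
    (ξ : (Σ j : Fin N, Fin (m j)) → Fin N → (Fin N → ℤ) → ℝ)
    (hξ : ∀ a, ∀ j k : Fin N, j ≠ k → Δ k (ξ a j) = T k (Q j k) * ξ a k)
    (k : Fin N) :
    ∀ n : Fin N → ℤ,
      (Wmat m ξ (n + Pi.single k 1)).det - (Wmat m ξ n).det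
        = ((Wmat m ξ (n + Pi.single k 1)).updateRow (lastRow m k (hm k))
            (fun a => (Δ k)^[m k] (ξ a k) (n + Pi.single k 1 - Pi.single k 1))).det :=
  statement_15_general N Q m hm ξ hξ k
end
end

section
/- Let ξ^1, …, ξ^M and χ be tangent solutions, and let 𝒲 be the discrete multi-Wroński matrix of ξ^1,…,ξ^M for the partition M = m_1 + … + m_N. For i ∈ {1,…,N}, let 𝕏_i be the (M+1)×(M+1) matrix obtained from 𝒲 by adjoining the column with entry Δ_j^p χ_j in row (j,p) and the bottom row (Δ_i^{m_i} ξ^1_i, …, Δ_i^{m_i} ξ^M_i, Δ_i^{m_i} χ_i); and for i ≠ j, let 𝒲_{ij} be the M×M matrix obtained from 𝒲 by replacing the row (j, m_j−1) by (Δ_i^{m_i} ξ^1_i, …, Δ_i^{m_i} ξ^M_i). Then for all i ≠ k the bilinear identity holds: (det 𝒲)·Δ_k(det 𝕏_i) − (det 𝕏_i)·Δ_k(det 𝒲) + (det 𝕏_k)·T_k(det 𝒲_{ik}) = 0. -/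
noncomputable section

/-- The bordered matrix `𝕏_i(n)`: the multi-Wroński matrix `𝒲(n)` augmented by the
column `(Δ_j^p χ_j(n))_{(j,p)}` built from the tangent solution `χ` and by the bottom
row `(Δ_i^{m_i} ξ^a_i(n))_a, Δ_i^{m_i} χ_i(n)`. -/
def Xmat {N : ℕ} (m : Fin N → ℕ)
    (ξ : (Σ j : Fin N, Fin (m j)) → Fin N → (Fin N → ℤ) → ℝ)
    (χ : Fin N → (Fin N → ℤ) → ℝ) (i : Fin N) (n : Fin N → ℤ) :
    Matrix (Option (Σ j : Fin N, Fin (m j))) (Option (Σ j : Fin N, Fin (m j))) ℝ :=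
  Matrix.of fun r a =>
    match r, a with
    | some r, some a => (Δ r.1)^[(r.2 : ℕ)] (ξ a r.1) n
    | some r, none => (Δ r.1)^[(r.2 : ℕ)] (χ r.1) n
    | none, some a => (Δ i)^[m i] (ξ a i) n
    | none, none => (Δ i)^[m i] (χ i) n

/-! Stack the `M + 1` solutions `ξ^a, χ` into one vector-valued tangent solution `Θ`: then the
rows of `𝕏_i(n)` are `Δ_j^p Θ_j(n)` followed by `Δ_i^{m_i} Θ_i(n)`, and `det 𝒲(n)` is `det 𝕏_i(n)`
with its last row replaced by the unit vector of the `χ` column. As `Δ_k Θ_j ∈ ℝ Θ_k` for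
`j ≠ k`, induction on `p` puts `Δ_k Δ_j^p Θ_j(n)` (for `p ≤ m_j`) in the span `U` of the first `M`
rows of `𝕏_i(n)`. Hence every row `(j, p) ≠ (k, m_k - 1)` of `𝕏_i(n + e_k)` lies in `U`, its last
row is congruent to that of `𝕏_i(n)` modulo `U`, and its row `(k, m_k - 1)` is congruent to
`Δ_k^{m_k} Θ_k(n)`, the last row of `𝕏_k(n)`. In the exchange identity
`det A · det B = ∑_t det (A with row s := B_t) · det (B with row t := A_s)` for `A = 𝕏_i(n)` with
the unit last row, `B = 𝕏_i(n + e_k)` and `s` the last row, only two terms survive, and they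
give the bilinear identity. -/

open fwdDiff

namespace Matrix
variable {R κ ι : Type*} [CommRing R] [Fintype κ] [DecidableEq κ]

def detRowLinear (A : Matrix κ κ R) (i : κ) : (κ → R) →ₗ[R] R :=
  (detRowAlternating : (κ → R) [⋀^κ]→ₗ[R] R).toMultilinearMap.toLinearMap A i

theorem detRowLinear_apply (A : Matrix κ κ R) (i : κ) (u : κ → R) :
    detRowLinear A i u = (A.updateRow i u).det := rfl

theorem det_updateRow_eq_zero_of_mem_span (A : Matrix κ κ R) (i : κ) {u : κ → R}
    (hu : u ∈ Submodule.span R (A '' {i}ᶜ)) : (A.updateRow i u).det = 0 := by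
  suffices Submodule.span R (A '' {i}ᶜ) ≤ LinearMap.ker (detRowLinear A i) from this hu
  rw [Submodule.span_le]
  rintro _ ⟨j, hj, rfl⟩
  rw [SetLike.mem_coe, LinearMap.mem_ker, detRowLinear_apply]
  exact det_zero_of_row_eq (Ne.symm hj) (by rw [updateRow_self, updateRow_ne hj])

theorem det_updateRow_eq_of_sub_mem_span (A : Matrix κ κ R) (i : κ) {u u' : κ → R}
    (hu : u - u' ∈ Submodule.span R (A '' {i}ᶜ)) :
    (A.updateRow i u).det = (A.updateRow i u').det := by
  rw [← sub_eq_zero, ← detRowLinear_apply, ← detRowLinear_apply, ← map_sub,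
    detRowLinear_apply, det_updateRow_eq_zero_of_mem_span A i hu]

theorem det_updateRow_updateRow_self {s t : κ} (hst : s ≠ t) (B : Matrix κ κ R) (u : κ → R) :
    ((B.updateRow t (B s)).updateRow s u).det = -(B.updateRow t u).det := by
  have hswap : (B.updateRow t (B s)).updateRow s u =
      (B.updateRow t u).submatrix (Equiv.swap s t) id := by
    ext r a
    rcases eq_or_ne r s with rfl | hrs
    · simp
    rcases eq_or_ne r t with rfl | hrt
    · simp [updateRow_ne hrs, updateRow_ne hst]
    · simp [updateRow_ne hrs, updateRow_ne hrt, Equiv.swap_apply_of_ne_of_ne hrs hrt]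
  rw [hswap, det_permute, Equiv.Perm.sign_swap hst]
  simp

theorem det_updateRow_none_single [Fintype ι] [DecidableEq ι] (A : Matrix (Option ι) (Option ι) R) :
    (A.updateRow none (Pi.single none 1)).det = (A.submatrix some some).det := by
  have hblocks : reindex (Equiv.optionEquivSumPUnit.{0} ι) (Equiv.optionEquivSumPUnit.{0} ι)
      (A.updateRow none (Pi.single none 1)) =
      fromBlocks (A.submatrix some some) (of fun r _ => A (some r) none) 0 1 := by
    ext (r | r) (a | a) <;> simp [updateRow_ne]
  rw [← det_reindex_self (Equiv.optionEquivSumPUnit.{0} ι), hblocks, det_fromBlocks_zero₂₁, det_one,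
    mul_one]

theorem updateRow_some_submatrix_some {α : Type*} [DecidableEq ι]
    (A : Matrix (Option ι) (Option ι) α) (r : ι) (u : Option ι → α) :
    (A.updateRow (some r) u).submatrix some some =
      (A.submatrix some some).updateRow r (u ∘ some) := by
  ext s a
  rcases eq_or_ne s r with rfl | hsr
  · simp
  · simp [updateRow_ne hsr, updateRow_ne (Option.some_injective ι |>.ne hsr)]

theorem sum_det_updateRow_smul_row (A : Matrix κ κ R) (b : κ → R) :
    ∑ t, (A.updateRow t b).det • A t = A.det • b := by
  have := mulVec_cramer Aᵀ b
  rw [det_transpose, mulVec_transpose, vecMul_eq_sum] at this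
  simpa [cramer_transpose_apply] using this

theorem det_mul_det_eq_sum_det_updateRow (A B : Matrix κ κ R) (s : κ) :
    A.det * B.det = ∑ t, (A.updateRow s (B t)).det * (B.updateRow t (A s)).det := by
  calc A.det * B.det = detRowLinear A s (B.det • A s) := by
        rw [map_smul, detRowLinear_apply, updateRow_eq_self, smul_eq_mul, mul_comm]
    _ = _ := by
        rw [← sum_det_updateRow_smul_row, map_sum]
        simp only [map_smul, detRowLinear_apply, smul_eq_mul, mul_comm]

/-- In the exchange identity along row `s` for `A.updateRow s e` and `B`, the hypotheses kill
every term except `t = s` and `t = t₀`. -/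
theorem det_updateRow_mul_det_of_mem_span (A B : Matrix κ κ R) {s t : κ} (hst : s ≠ t)
    (e w : κ → R) (hB : ∀ r, r ≠ s → r ≠ t → B r ∈ Submodule.span R (A '' {s}ᶜ))
    (hBs : B s - A s ∈ Submodule.span R (A '' {s}ᶜ))
    (hBt : B t - w ∈ Submodule.span R (A '' {s}ᶜ)) :
    (A.updateRow s e).det * B.det =
      A.det * (B.updateRow s e).det -
        (A.updateRow s w).det * ((B.updateRow t (B s)).updateRow s e).det := by
  have hrow : ∀ u, (A.updateRow s e).updateRow s u = A.updateRow s u := fun u => by simp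
  rw [det_mul_det_eq_sum_det_updateRow _ _ s, Fintype.sum_eq_add s t hst]
  · simp only [hrow, updateRow_self]
    rw [det_updateRow_eq_of_sub_mem_span A s hBs, updateRow_eq_self,
      det_updateRow_eq_of_sub_mem_span A s hBt, det_updateRow_updateRow_self hst]
    ring
  · rintro r ⟨hrs, hrt⟩
    rw [hrow, det_updateRow_eq_zero_of_mem_span A s (hB r hrs hrt), zero_mul]

end Matrix

section FwdDiff
variable {M V : Type*} [AddCommMonoid M] [AddCommGroup V]

theorem fwdDiff_comm (h h' : M) (f : M → V) : Δ_[h] (Δ_[h'] f) = Δ_[h'] (Δ_[h] f) := by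
  funext x
  simp only [fwdDiff, add_right_comm x h h']
  abel

theorem fwdDiff_iter_apply_apply {ι : Type*} (h : M) (p : ℕ) (F : M → ι → V) (x : M) (a : ι) :
    Δ_[h] ^[p] F x a = Δ_[h] ^[p] (fun y => F y a) x := by
  simp [fwdDiff_iter_eq_sum_shift, Finset.sum_apply]

theorem apply_add_eq_add_fwdDiff (h : M) (f : M → V) (x : M) : f (x + h) = f x + Δ_[h] f x :=
  (add_sub_cancel (f x) _).symm

variable {R : Type*} [Ring R] [Module R V]

theorem fwdDiff_fwdDiff_iter_mem_span {f g : M → V} {h h' : M}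
    (hf : ∀ x, Δ_[h'] f x ∈ R ∙ g x) (hg : ∀ x, Δ_[h] g x ∈ R ∙ f x) (p : ℕ) (x : M) :
    Δ_[h'] (Δ_[h] ^[p] f) x ∈
      Submodule.span R (insert (g x) ((fun q => Δ_[h] ^[q] f x) '' Set.Iio p)) := by
  induction p generalizing x with
  | zero =>
    exact Submodule.span_mono (Set.singleton_subset_iff.mpr (Set.mem_insert _ _)) (hf x)
  | succ p ih =>
    set S := Submodule.span R (insert (g x) ((fun q => Δ_[h] ^[q] f x) '' Set.Iio (p + 1)))
    have hmem : ∀ q < p + 1, Δ_[h] ^[q] f x ∈ S := fun q hq =>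
      Submodule.subset_span (Set.mem_insert_of_mem _ ⟨q, hq, rfl⟩)
    have hgx : g x ∈ S := Submodule.subset_span (Set.mem_insert _ _)
    have hle : Submodule.span R (insert (g x) ((fun q => Δ_[h] ^[q] f x) '' Set.Iio p)) ≤ S :=
      Submodule.span_mono (Set.insert_subset_insert (Set.image_mono
        (Set.Iio_subset_Iio (Nat.le_succ p))))
    have hle' : Submodule.span R
        (insert (g (x + h)) ((fun q => Δ_[h] ^[q] f (x + h)) '' Set.Iio p)) ≤ S := by
      rw [Submodule.span_le, Set.insert_subset_iff]
      refine ⟨?_, ?_⟩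
      · rw [apply_add_eq_add_fwdDiff h g]
        obtain ⟨c, hc⟩ := Submodule.mem_span_singleton.mp (hg x)
        rw [← hc]
        exact S.add_mem hgx (S.smul_mem c (hmem 0 p.succ_pos))
      · rintro _ ⟨q, hq, rfl⟩
        dsimp only
        rw [SetLike.mem_coe, apply_add_eq_add_fwdDiff h (Δ_[h] ^[q] f),
          ← Function.iterate_succ_apply' (Δ_[h])]
        exact S.add_mem (hmem q (Nat.lt_succ_of_lt hq)) (hmem (q + 1) (Nat.succ_lt_succ hq))
    rw [Function.iterate_succ_apply', fwdDiff_comm]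
    exact S.sub_mem (hle' (ih (x + h))) (hle (ih x))

end FwdDiff

section MultiWronskian

variable {N : ℕ} {R V : Type*} [Ring R] [AddCommGroup V] [Module R V]

def wronskiRow (m : Fin N → ℕ) (Θ : Fin N → (Fin N → ℤ) → V) (n : Fin N → ℤ)
    (r : Σ j : Fin N, Fin (m j)) : V :=
  Δ_[Pi.single r.1 1] ^[r.2] (Θ r.1) n

theorem wronskiRow_lastRow_add_single (m : Fin N → ℕ) (Θ : Fin N → (Fin N → ℤ) → V) (k : Fin N)
    (hk : 0 < m k) (n : Fin N → ℤ) :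
    wronskiRow m Θ (n + Pi.single k 1) (lastRow m k hk) =
      wronskiRow m Θ n (lastRow m k hk) + Δ_[Pi.single k 1] ^[m k] (Θ k) n := by
  simp only [wronskiRow, lastRow]
  rw [apply_add_eq_add_fwdDiff _ (Δ_[Pi.single k 1] ^[m k - 1] (Θ k)),
    ← Function.iterate_succ_apply' (Δ_[Pi.single k 1]), Nat.succ_eq_add_one, Nat.sub_add_cancel hk]

variable {m : Fin N → ℕ} {Θ : Fin N → (Fin N → ℤ) → V}

theorem fwdDiff_fwdDiff_iter_mem_span_range_wronskiRow (hm : ∀ j, 0 < m j)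
    (hΘ : ∀ j k : Fin N, j ≠ k → ∀ n, Δ_[Pi.single k 1] (Θ j) n ∈ R ∙ Θ k n)
    {j k : Fin N} (hjk : j ≠ k) {p : ℕ} (hp : p ≤ m j) (n : Fin N → ℤ) :
    Δ_[Pi.single k 1] (Δ_[Pi.single j 1] ^[p] (Θ j)) n ∈
      Submodule.span R (Set.range (wronskiRow m Θ n)) := by
  refine Submodule.span_mono ?_
    (fwdDiff_fwdDiff_iter_mem_span (hΘ j k hjk) (hΘ k j hjk.symm) p n)
  rw [Set.insert_subset_iff]
  refine ⟨⟨⟨k, ⟨0, hm k⟩⟩, rfl⟩, ?_⟩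
  rintro _ ⟨q, hq, rfl⟩
  exact ⟨⟨j, ⟨q, lt_of_lt_of_le hq hp⟩⟩, rfl⟩

theorem wronskiRow_add_single_mem_span (hm : ∀ j, 0 < m j)
    (hΘ : ∀ j k : Fin N, j ≠ k → ∀ n, Δ_[Pi.single k 1] (Θ j) n ∈ R ∙ Θ k n)
    {k : Fin N} {r : Σ j : Fin N, Fin (m j)} (hr : r ≠ lastRow m k (hm k)) (n : Fin N → ℤ) :
    wronskiRow m Θ (n + Pi.single k 1) r ∈ Submodule.span R (Set.range (wronskiRow m Θ n)) := by
  obtain ⟨j, q⟩ := r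
  rw [wronskiRow, apply_add_eq_add_fwdDiff _ (Δ_[Pi.single j 1] ^[q] (Θ j))]
  refine Submodule.add_mem _ (Submodule.subset_span ⟨⟨j, q⟩, rfl⟩) ?_
  rcases eq_or_ne j k with rfl | hjk
  · have hq : (q : ℕ) + 1 < m j := by
      have : (q : ℕ) ≠ m j - 1 := fun h => hr (by simp [lastRow, ← h])
      omega
    rw [← Function.iterate_succ_apply' (Δ_[Pi.single j 1])]
    exact Submodule.subset_span ⟨⟨j, ⟨q + 1, hq⟩⟩, rfl⟩
  · exact fwdDiff_fwdDiff_iter_mem_span_range_wronskiRow hm hΘ hjk q.2.le n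

theorem fwdDiff_iter_add_single_sub_mem_span (hm : ∀ j, 0 < m j)
    (hΘ : ∀ j k : Fin N, j ≠ k → ∀ n, Δ_[Pi.single k 1] (Θ j) n ∈ R ∙ Θ k n)
    {i k : Fin N} (hik : i ≠ k) (n : Fin N → ℤ) :
    Δ_[Pi.single i 1] ^[m i] (Θ i) (n + Pi.single k 1) - Δ_[Pi.single i 1] ^[m i] (Θ i) n ∈
      Submodule.span R (Set.range (wronskiRow m Θ n)) := by
  rw [apply_add_eq_add_fwdDiff _ (Δ_[Pi.single i 1] ^[m i] (Θ i)), add_sub_cancel_left]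
  exact fwdDiff_fwdDiff_iter_mem_span_range_wronskiRow hm hΘ hik le_rfl n

end MultiWronskian

section BilinearIdentity

variable {N : ℕ} {m : Fin N → ℕ}

def stackedSolution (ξ : (Σ j : Fin N, Fin (m j)) → Fin N → (Fin N → ℤ) → ℝ)
    (χ : Fin N → (Fin N → ℤ) → ℝ) (j : Fin N) (n : Fin N → ℤ) :
    Option (Σ j : Fin N, Fin (m j)) → ℝ :=
  fun a => a.elim (χ j n) (ξ · j n)

variable {ξ : (Σ j : Fin N, Fin (m j)) → Fin N → (Fin N → ℤ) → ℝ} {χ : Fin N → (Fin N → ℤ) → ℝ}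

theorem fwdDiff_stackedSolution_mem_span {Q : Fin N → Fin N → (Fin N → ℤ) → ℝ}
    (hξ : ∀ a, ∀ j k : Fin N, j ≠ k → Δ k (ξ a j) = T k (Q j k) * ξ a k)
    (hχ : ∀ j k : Fin N, j ≠ k → Δ k (χ j) = T k (Q j k) * χ k)
    {j k : Fin N} (hjk : j ≠ k) (n : Fin N → ℤ) :
    Δ_[Pi.single k 1] (stackedSolution ξ χ j) n ∈ ℝ ∙ stackedSolution ξ χ k n := by
  refine Submodule.mem_span_singleton.mpr ⟨T k (Q j k) n, funext fun a => ?_⟩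
  rcases a with _ | a
  · exact (congrFun (hχ j k hjk) n).symm
  · exact (congrFun (hξ a j k hjk) n).symm

theorem Xmat_some (i : Fin N) (n : Fin N → ℤ) (r : Σ j : Fin N, Fin (m j)) :
    Xmat m ξ χ i n (some r) = wronskiRow m (stackedSolution ξ χ) n r := by
  funext a
  rcases a with _ | a <;> rw [wronskiRow, fwdDiff_iter_apply_apply] <;> rfl

theorem Xmat_none (i : Fin N) (n : Fin N → ℤ) :
    Xmat m ξ χ i n none = Δ_[Pi.single i 1] ^[m i] (stackedSolution ξ χ i) n := by
  funext a
  rcases a with _ | a <;> rw [fwdDiff_iter_apply_apply] <;> rfl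

theorem Xmat_updateRow_none (i k : Fin N) (n : Fin N → ℤ) :
    (Xmat m ξ χ i n).updateRow none (Xmat m ξ χ k n none) = Xmat m ξ χ k n := by
  ext (_ | r) a
  · rw [Matrix.updateRow_self]
  · rw [Matrix.updateRow_ne (Option.some_ne_none r), Xmat_some, Xmat_some]

theorem range_wronskiRow_subset_image_Xmat (i : Fin N) (n : Fin N → ℤ) :
    Set.range (wronskiRow m (stackedSolution ξ χ) n) ⊆ Xmat m ξ χ i n '' {none}ᶜ := by
  rintro _ ⟨r, rfl⟩
  exact ⟨some r, Option.some_ne_none r, Xmat_some i n r⟩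

theorem det_Wmat (χ : Fin N → (Fin N → ℤ) → ℝ) (i : Fin N) (n : Fin N → ℤ) :
    (Wmat m ξ n).det = ((Xmat m ξ χ i n).updateRow none (Pi.single none 1)).det := by
  rw [Matrix.det_updateRow_none_single]
  rfl

theorem det_Wmat_updateRow (i : Fin N) (n : Fin N → ℤ) (r : Σ j : Fin N, Fin (m j)) :
    ((Wmat m ξ n).updateRow r (fun a => (Δ i)^[m i] (ξ a i) n)).det =
      (((Xmat m ξ χ i n).updateRow (some r) (Xmat m ξ χ i n none)).updateRow none
        (Pi.single none 1)).det := by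
  rw [Matrix.det_updateRow_none_single, Matrix.updateRow_some_submatrix_some]
  rfl

end BilinearIdentity

theorem statement_17_general (N : ℕ)
    (Q : Fin N → Fin N → (Fin N → ℤ) → ℝ)
    (m : Fin N → ℕ) (hm : ∀ j, 0 < m j)
    (ξ : (Σ j : Fin N, Fin (m j)) → Fin N → (Fin N → ℤ) → ℝ)
    (hξ : ∀ a, ∀ j k : Fin N, j ≠ k → Δ k (ξ a j) = T k (Q j k) * ξ a k)
    (χ : Fin N → (Fin N → ℤ) → ℝ)
    (hχ : ∀ j k : Fin N, j ≠ k → Δ k (χ j) = T k (Q j k) * χ k) :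
    ∀ i k : Fin N, i ≠ k → ∀ n : Fin N → ℤ,
      (Wmat m ξ n).det
          * ((Xmat m ξ χ i (n + Pi.single k 1)).det - (Xmat m ξ χ i n).det)
        - (Xmat m ξ χ i n).det
          * ((Wmat m ξ (n + Pi.single k 1)).det - (Wmat m ξ n).det)
        + (Xmat m ξ χ k n).det
          * ((Wmat m ξ (n + Pi.single k 1)).updateRow (lastRow m k (hm k))
              (fun a => (Δ i)^[m i] (ξ a i) (n + Pi.single k 1))).det
        = 0 := by
  intro i k hik n
  have hΘ := fun j k (hjk : j ≠ k) => fwdDiff_stackedSolution_mem_span hξ hχ hjk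
  have hspan := Submodule.span_mono (R := ℝ)
    (range_wronskiRow_subset_image_Xmat (ξ := ξ) (χ := χ) i n)
  have hexchange := Matrix.det_updateRow_mul_det_of_mem_span (Xmat m ξ χ i n)
    (Xmat m ξ χ i (n + Pi.single k 1)) (Option.some_ne_none (lastRow m k (hm k))).symm
    (Pi.single none 1) (Xmat m ξ χ k n none) ?_ ?_ ?_
  · rw [← det_Wmat χ i, ← det_Wmat χ i, ← det_Wmat_updateRow, Xmat_updateRow_none] at hexchange
    linear_combination hexchange
  · rintro (_ | r) hr hr₀
    · exact absurd rfl hr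
    rw [Xmat_some]
    exact hspan (wronskiRow_add_single_mem_span hm hΘ (fun h => hr₀ (congrArg some h)) n)
  · rw [Xmat_none, Xmat_none]
    exact hspan (fwdDiff_iter_add_single_sub_mem_span hm hΘ hik n)
  · rw [Xmat_some, Xmat_none, wronskiRow_lastRow_add_single, add_sub_cancel_right]
    exact Submodule.subset_span ⟨some _, Option.some_ne_none _, Xmat_some i n _⟩

/-- The bilinear identity
`det 𝒲 · Δ_k(det 𝕏_i) − det 𝕏_i · Δ_k(det 𝒲) + det 𝕏_k · T_k(det 𝒲_{ik}) = 0`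
for `i ≠ k`, where `𝒲_{ik}` is `𝒲` with the last row of the `k`-th block replaced by
`Δ_i^{m_i} ξ_i`. -/
theorem statement_17 (N : ℕ) (hN : 2 ≤ N)
    (Q : Fin N → Fin N → (Fin N → ℤ) → ℝ)
    (m : Fin N → ℕ) (hm : ∀ j, 0 < m j)
    (ξ : (Σ j : Fin N, Fin (m j)) → Fin N → (Fin N → ℤ) → ℝ)
    (hξ : ∀ a, ∀ j k : Fin N, j ≠ k → Δ k (ξ a j) = T k (Q j k) * ξ a k)
    (χ : Fin N → (Fin N → ℤ) → ℝ)
    (hχ : ∀ j k : Fin N, j ≠ k → Δ k (χ j) = T k (Q j k) * χ k) :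
    ∀ i k : Fin N, i ≠ k → ∀ n : Fin N → ℤ,
      (Wmat m ξ n).det
          * ((Xmat m ξ χ i (n + Pi.single k 1)).det - (Xmat m ξ χ i n).det)
        - (Xmat m ξ χ i n).det
          * ((Wmat m ξ (n + Pi.single k 1)).det - (Wmat m ξ n).det)
        + (Xmat m ξ χ k n).det
          * ((Wmat m ξ (n + Pi.single k 1)).updateRow (lastRow m k (hm k))
              (fun a => (Δ i)^[m i] (ξ a i) (n + Pi.single k 1))).det
        = 0 :=
  statement_17_general N Q m hm ξ hξ χ hχ
end
end

section
/- Let ξ^1,…,ξ^M and χ be tangent solutions, (H_1,…,H_N) a Lamé solution, and Ω^1,…,Ω^M potentials with Δ_m Ω^a = ξ^a_m·(T_m H_m) for all m, a. Let 𝒲 be the discrete multi-Wroński matrix of ξ^1,…,ξ^M for the partition M = m_1+…+m_N; let 𝕏_i be the (M+1)×(M+1) matrix obtained from 𝒲 by adjoining the column with entry Δ_j^p χ_j in row (j,p) and the bottom row (Δ_i^{m_i}ξ^1_i,…,Δ_i^{m_i}ξ^M_i, Δ_i^{m_i}χ_i); let ℍ_i be 𝒲 with row (i,m_i−1) replaced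 by (Ω^1,…,Ω^M); and for i ≠ j let 𝒲_{ij} be 𝒲 with row (j,m_j−1) replaced by (Δ_i^{m_i}ξ^1_i,…,Δ_i^{m_i}ξ^M_i). Assume det 𝒲 is nowhere vanishing, and define X_i[M] := det 𝕏_i / det 𝒲, H_i[M] := −det ℍ_i / det 𝒲, and Q_{ij}[M] := −det 𝒲_{ij} / det 𝒲. Then for all i ≠ k: Δ_k X_i[M] = (T_k Q_{ik}[M])·X_k[M] and Δ_k H_i[M] = Q_{ki}[M]·(T_k H_k[M]); that is, the iterated Levy transformation produces a new solution of the quadrilateral-lattice linear systems with rotation coefficients Q_{ij}[M]. -/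
/-!
Tangent solutions form a vector space, and for `j ≠ k` the discrete Leibniz rule shows that
`Δ_j^p f_j(n + e_k) - Δ_j^p f_j(n)` is a combination of the `Δ_j^s f_j(n)`, `s < p`, and of
`f_k(n)`. Hence if the jet `(Δ_j^p f_j(n))_{(j,p)}` of a tangent solution vanishes off the last
rows of the blocks `j ≠ k`, moving `n` to `n + e_k` changes the jet only in the last row of
block `k`, by `Δ_k^{m_k} f_k(n)`.

By the Schur complement, `X_i[M](n)` is the top difference `Δ_i^{m_i}` of `χ` minus the
combination of the `ξ^a` with the same jet at `n`; subtracting the combination matched at one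
point `n` reduces the `X`-equation to a tangent solution with zero jet at `n`. By Cramer's rule,
`H_i[M]` and `Q_{ki}[M]` are read off the column `(i, m_i - 1)` of `𝒲⁻¹`, the coefficients of the
combination of the `ξ^a` with jet `e_{(i, m_i - 1)}`; the same shift rule compares these columns
at `n` and `n + e_k`. The `H`-equation then follows from `Δ_k Ω^a = ξ^a_k · T_k H_k`, since the
row `(k, 0)` of `𝒲(n)`, namely `(ξ^a_k(n))_a`, is orthogonal to that column for `i ≠ k`.
-/

noncomputable section

open Matrix

variable {N : ℕ}

def ΔL (j : Fin N) : Module.End ℝ ((Fin N → ℤ) → ℝ) :=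
  LinearMap.funLeft ℝ ℝ (· + Pi.single j 1) - LinearMap.id

theorem coe_ΔL (j : Fin N) : ⇑(ΔL j) = Δ j := rfl

theorem iterate_Δ_eq_coe_pow (j : Fin N) (p : ℕ) : (Δ j)^[p] = ⇑(ΔL j ^ p) := by
  rw [Module.End.coe_pow, coe_ΔL]

theorem iterate_Δ_succ_apply (j : Fin N) (f : (Fin N → ℤ) → ℝ) (p : ℕ) (n : Fin N → ℤ) :
    (Δ j)^[p + 1] f n = (Δ j)^[p] f (n + Pi.single j 1) - (Δ j)^[p] f n := by
  rw [Function.iterate_succ_apply']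
  rfl

theorem commute_ΔL (j k : Fin N) : Commute (ΔL j) (ΔL k) := by
  ext f n
  simp only [Module.End.mul_apply, coe_ΔL, Δ]
  rw [add_right_comm n]
  ring

theorem iterate_Δ_apply_add_single_sub (j k : Fin N) (f : (Fin N → ℤ) → ℝ) (p : ℕ)
    (n : Fin N → ℤ) :
    (Δ j)^[p] f (n + Pi.single k 1) - (Δ j)^[p] f n = (Δ j)^[p] (Δ k f) n := by
  rw [iterate_Δ_eq_coe_pow, ← coe_ΔL k, ← Module.End.mul_apply, ((commute_ΔL j k).pow_left p).eq]
  rfl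

theorem iterate_Δ_mul_apply_eq_zero (j : Fin N) (g h : (Fin N → ℤ) → ℝ) :
    ∀ (p : ℕ) (n : Fin N → ℤ), (∀ s ≤ p, (Δ j)^[s] h n = 0) → (Δ j)^[p] (g * h) n = 0
  | 0, n, hh => mul_eq_zero_of_right _ (hh 0 le_rfl)
  | p + 1, n, hh => by
    rw [iterate_Δ_succ_apply, iterate_Δ_mul_apply_eq_zero j g h p n fun s hs => hh s (by omega),
      iterate_Δ_mul_apply_eq_zero j g h p _ fun s hs => ?_, sub_zero]
    have := iterate_Δ_succ_apply j h s n
    linarith [hh s (by omega), hh (s + 1) (by omega)]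

def tangentSolutions (Q : Fin N → Fin N → (Fin N → ℤ) → ℝ) :
    Submodule ℝ (Fin N → (Fin N → ℤ) → ℝ) where
  carrier := {f | ∀ j k, j ≠ k → Δ k (f j) = T k (Q j k) * f k}
  add_mem' {f g} hf hg j k hjk := by
    rw [Pi.add_apply, Pi.add_apply, ← coe_ΔL, map_add, coe_ΔL, hf j k hjk, hg j k hjk, mul_add]
  zero_mem' j k _ := by
    rw [Pi.zero_apply, Pi.zero_apply, ← coe_ΔL, map_zero, mul_zero]
  smul_mem' c f hf j k hjk := by
    rw [Pi.smul_apply, Pi.smul_apply, ← coe_ΔL, map_smul, coe_ΔL, hf j k hjk, mul_smul_comm]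

theorem iterate_Δ_apply_add_single_eq {Q : Fin N → Fin N → (Fin N → ℤ) → ℝ}
    {f : Fin N → (Fin N → ℤ) → ℝ} (hf : f ∈ tangentSolutions Q) {j k : Fin N} (hjk : j ≠ k)
    {p : ℕ} {n : Fin N → ℤ} (hk : f k n = 0) (hj : ∀ s < p, (Δ j)^[s] (f j) n = 0) :
    (Δ j)^[p] (f j) (n + Pi.single k 1) = (Δ j)^[p] (f j) n := by
  rw [← sub_eq_zero, iterate_Δ_apply_add_single_sub, hf j k hjk]
  refine iterate_Δ_mul_apply_eq_zero _ _ _ p n fun s hs => ?_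
  cases s with
  | zero => exact hk
  | succ s =>
    rw [Function.iterate_succ_apply, hf k j hjk.symm]
    exact iterate_Δ_mul_apply_eq_zero _ _ _ s n fun t ht => hj t (by omega)

section Jet

variable (m : Fin N → ℕ)

def jet (n : Fin N → ℤ) :
    (Fin N → (Fin N → ℤ) → ℝ) →ₗ[ℝ] (Σ j : Fin N, Fin (m j)) → ℝ :=
  LinearMap.pi fun r => LinearMap.proj n ∘ₗ (ΔL r.1 ^ (r.2 : ℕ)) ∘ₗ LinearMap.proj r.1

def topDiff (i : Fin N) (n : Fin N → ℤ) : (Fin N → (Fin N → ℤ) → ℝ) →ₗ[ℝ] ℝ :=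
  LinearMap.proj n ∘ₗ (ΔL i ^ m i) ∘ₗ LinearMap.proj i

variable {m}

@[simp]
theorem jet_apply (n : Fin N → ℤ) (f : Fin N → (Fin N → ℤ) → ℝ) (r : Σ j : Fin N, Fin (m j)) :
    jet m n f r = (Δ r.1)^[r.2] (f r.1) n := by
  simp [jet, iterate_Δ_eq_coe_pow]

@[simp]
theorem topDiff_apply (i : Fin N) (n : Fin N → ℤ) (f : Fin N → (Fin N → ℤ) → ℝ) :
    topDiff m i n f = (Δ i)^[m i] (f i) n := by
  simp [topDiff, iterate_Δ_eq_coe_pow]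

theorem Wmat_mulVec (ξ : (Σ j : Fin N, Fin (m j)) → Fin N → (Fin N → ℤ) → ℝ)
    (n : Fin N → ℤ) (c : (Σ j : Fin N, Fin (m j)) → ℝ) :
    Wmat m ξ n *ᵥ c = jet m n (∑ a, c a • ξ a) := by
  ext r
  simp only [map_sum, map_smul]
  simp only [Finset.sum_apply, Pi.smul_apply, smul_eq_mul, mulVec, dotProduct, Wmat, of_apply,
    jet_apply, mul_comm]

theorem topDiff_sum_smul (ξ : (Σ j : Fin N, Fin (m j)) → Fin N → (Fin N → ℤ) → ℝ)
    (i : Fin N) (n : Fin N → ℤ) (c : (Σ j : Fin N, Fin (m j)) → ℝ) :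
    topDiff m i n (∑ a, c a • ξ a) = (fun a => topDiff m i n (ξ a)) ⬝ᵥ c := by
  simp only [map_sum, map_smul, smul_eq_mul, dotProduct, mul_comm]

theorem jet_add_single_eq {Q : Fin N → Fin N → (Fin N → ℤ) → ℝ}
    {f : Fin N → (Fin N → ℤ) → ℝ} (hf : f ∈ tangentSolutions Q) {k : Fin N} (hk : 0 < m k)
    {n : Fin N → ℤ}
    (hsupp : ∀ r : Σ j : Fin N, Fin (m j), (r.1 = k ∨ (r.2 : ℕ) + 1 < m r.1) → jet m n f r = 0) :
    jet m (n + Pi.single k 1) f = jet m n f + topDiff m k n f • Pi.single (lastRow m k hk) 1 := by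
  ext ⟨j, p, hpj⟩
  simp only [jet_apply, topDiff_apply, Pi.add_apply, Pi.smul_apply, smul_eq_mul]
  by_cases hjk : j = k
  · subst hjk
    have hshift := iterate_Δ_succ_apply j (f j) p n
    rcases (Nat.succ_le_of_lt hpj).eq_or_lt with hlast | hlow
    · have hp : (⟨j, p, hpj⟩ : Σ j : Fin N, Fin (m j)) = lastRow m j hk := by
        simp only [lastRow, Sigma.mk.injEq, heq_eq_eq, true_and, Fin.mk.injEq]
        omega
      rw [hp, Pi.single_eq_same, ← hlast]
      linarith
    · have hnext := hsupp ⟨j, ⟨p + 1, hlow⟩⟩ (Or.inl rfl)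
      have hp : (⟨j, p, hpj⟩ : Σ j : Fin N, Fin (m j)) ≠ lastRow m j hk := by
        simp only [lastRow, ne_eq, Sigma.mk.injEq, heq_eq_eq, true_and, Fin.mk.injEq]
        omega
      rw [Pi.single_eq_of_ne hp]
      simp only [jet_apply] at hnext
      linarith
  · have hp : (⟨j, p, hpj⟩ : Σ j : Fin N, Fin (m j)) ≠ lastRow m k hk :=
      fun h => hjk (congrArg Sigma.fst h)
    rw [Pi.single_eq_of_ne hp, mul_zero, add_zero]
    refine iterate_Δ_apply_add_single_eq hf hjk ?_ fun s hs => ?_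
    · simpa using hsupp ⟨k, ⟨0, hk⟩⟩ (Or.inl rfl)
    · simpa using hsupp ⟨j, ⟨s, by omega⟩⟩ (Or.inr (show s + 1 < m j by omega))

end Jet

section Cramer

variable {ι K : Type*} [Fintype ι] [DecidableEq ι] [Field K]

theorem det_updateRow_div (W : Matrix ι ι K) (hW : W.det ≠ 0) (r : ι) (w : ι → K) :
    (W.updateRow r w).det / W.det = w ⬝ᵥ (W⁻¹ *ᵥ Pi.single r 1) := by
  have hw : w = ∑ s, (w ᵥ* W⁻¹) s • W s := by
    rw [← vecMul_eq_sum, vecMul_vecMul, nonsing_inv_mul _ (isUnit_iff_ne_zero.2 hW), vecMul_one]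
  conv_lhs => rw [hw]
  rw [det_updateRow_sum, smul_eq_mul, mul_div_cancel_right₀ _ hW, dotProduct_mulVec,
    dotProduct_single, mul_one]

theorem det_eq_det_submatrix_some_mul (A : Matrix (Option ι) (Option ι) K)
    (hA : (A.submatrix some some).det ≠ 0) :
    A.det = (A.submatrix some some).det * (A none none -
      (fun a => A none (some a)) ⬝ᵥ ((A.submatrix some some)⁻¹ *ᵥ fun r => A (some r) none)) := by
  set W := A.submatrix some some
  have : Invertible W := W.invertibleOfIsUnitDet (isUnit_iff_ne_zero.2 hA)
  let e : ι ⊕ Unit ≃ Option ι := (Equiv.optionEquivSumPUnit ι).symm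
  have hblocks : A.submatrix e e = fromBlocks W (of fun r _ => A (some r) none)
      (of fun _ a => A none (some a)) (of fun _ _ => A none none) := by
    ext (r | r) (a | a) <;> rfl
  rw [← det_submatrix_equiv_self e, hblocks, det_fromBlocks₁₁, det_unique (n := Unit),
    invOf_eq_nonsing_inv]
  congr 1
  simp only [Matrix.sub_apply, Matrix.mul_apply, of_apply, dotProduct, mulVec, Finset.mul_sum,
    Finset.sum_mul]
  rw [Finset.sum_comm]
  exact congrArg _ (Finset.sum_congr rfl fun _ _ => Finset.sum_congr rfl fun _ _ => by ring)

end Cramer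

section Levy

variable {Q : Fin N → Fin N → (Fin N → ℤ) → ℝ} {m : Fin N → ℕ}
  (ξ : (Σ j : Fin N, Fin (m j)) → Fin N → (Fin N → ℤ) → ℝ)

def levyTransform (f : Fin N → (Fin N → ℤ) → ℝ) (i : Fin N) (n : Fin N → ℤ) : ℝ :=
  topDiff m i n f - (fun a => topDiff m i n (ξ a)) ⬝ᵥ ((Wmat m ξ n)⁻¹ *ᵥ jet m n f)

theorem det_Xmat_div (χ : Fin N → (Fin N → ℤ) → ℝ) (i : Fin N) {n : Fin N → ℤ}
    (hW : (Wmat m ξ n).det ≠ 0) :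
    (Xmat m ξ χ i n).det / (Wmat m ξ n).det = levyTransform ξ χ i n := by
  have hsub : (Xmat m ξ χ i n).submatrix some some = Wmat m ξ n := rfl
  rw [det_eq_det_submatrix_some_mul _ (hsub ▸ hW), hsub, mul_div_cancel_left₀ _ hW,
    levyTransform, funext (jet_apply n χ)]
  simp [Xmat]

theorem levyTransform_sub_sum_smul {n : Fin N → ℤ} (hW : (Wmat m ξ n).det ≠ 0)
    (f : Fin N → (Fin N → ℤ) → ℝ) (c : (Σ j : Fin N, Fin (m j)) → ℝ) (i : Fin N) :
    levyTransform ξ (f - ∑ a, c a • ξ a) i n = levyTransform ξ f i n := by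
  simp only [levyTransform, map_sub, topDiff_sum_smul, ← Wmat_mulVec, mulVec_sub, mulVec_mulVec,
    nonsing_inv_mul _ (isUnit_iff_ne_zero.2 hW), one_mulVec, dotProduct_sub]
  ring

variable {ξ}

theorem levyTransform_add_single_sub (hξ : ∀ a, ξ a ∈ tangentSolutions Q)
    {f : Fin N → (Fin N → ℤ) → ℝ} (hf : f ∈ tangentSolutions Q) {i k : Fin N} (hik : i ≠ k)
    (hk : 0 < m k) {n : Fin N → ℤ}
    (hW : (Wmat m ξ n).det ≠ 0) (hW' : (Wmat m ξ (n + Pi.single k 1)).det ≠ 0) :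
    levyTransform ξ f i (n + Pi.single k 1) - levyTransform ξ f i n =
      -((fun a => (Δ i)^[m i] (ξ a i) (n + Pi.single k 1)) ⬝ᵥ
        ((Wmat m ξ (n + Pi.single k 1))⁻¹ *ᵥ Pi.single (lastRow m k hk) 1)) *
        levyTransform ξ f k n := by
  set c := (Wmat m ξ n)⁻¹ *ᵥ jet m n f
  set φ := f - ∑ a, c a • ξ a
  have hφ : φ ∈ tangentSolutions Q := sub_mem hf (sum_mem fun a _ => Submodule.smul_mem _ _ (hξ a))
  have hjet : jet m n φ = 0 := by
    rw [map_sub, ← Wmat_mulVec, mulVec_mulVec, mul_nonsing_inv _ (isUnit_iff_ne_zero.2 hW),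
      one_mulVec, sub_self]
  have hjet' : jet m (n + Pi.single k 1) φ = topDiff m k n φ • Pi.single (lastRow m k hk) 1 := by
    rw [jet_add_single_eq hφ hk fun r _ => by rw [hjet]; rfl, hjet, zero_add]
  have htop : topDiff m i (n + Pi.single k 1) φ = topDiff m i n φ := by
    simp only [topDiff_apply]
    exact iterate_Δ_apply_add_single_eq hφ hik (by simpa using congrFun hjet ⟨k, 0, hk⟩)
      fun s hs => by simpa using congrFun hjet ⟨i, s, hs⟩
  have hlevy : ∀ l, levyTransform ξ f l n = levyTransform ξ φ l n :=
    fun l => (levyTransform_sub_sum_smul ξ hW f c l).symm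
  have hlevy' : levyTransform ξ f i (n + Pi.single k 1) =
      levyTransform ξ φ i (n + Pi.single k 1) := (levyTransform_sub_sum_smul ξ hW' f c i).symm
  rw [hlevy', hlevy, hlevy]
  simp only [levyTransform, hjet, hjet', htop, mulVec_zero, dotProduct_zero, mulVec_smul,
    dotProduct_smul, smul_eq_mul, topDiff_apply]
  ring

theorem Wmat_inv_mulVec_single_lastRow_eq (hξ : ∀ a, ξ a ∈ tangentSolutions Q) {i k : Fin N}
    (hik : i ≠ k) (hi : 0 < m i) (hk : 0 < m k)
    {n : Fin N → ℤ} (hW : (Wmat m ξ n).det ≠ 0) (hW' : (Wmat m ξ (n + Pi.single k 1)).det ≠ 0) :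
    (Wmat m ξ n)⁻¹ *ᵥ Pi.single (lastRow m i hi) 1 =
      (Wmat m ξ (n + Pi.single k 1))⁻¹ *ᵥ Pi.single (lastRow m i hi) 1 +
        ((fun a => (Δ k)^[m k] (ξ a k) n) ⬝ᵥ ((Wmat m ξ n)⁻¹ *ᵥ Pi.single (lastRow m i hi) 1)) •
          (Wmat m ξ (n + Pi.single k 1))⁻¹ *ᵥ Pi.single (lastRow m k hk) 1 := by
  set y := (Wmat m ξ n)⁻¹ *ᵥ Pi.single (lastRow m i hi) 1
  set φ := ∑ a, y a • ξ a
  have hφ : φ ∈ tangentSolutions Q := sum_mem fun a _ => Submodule.smul_mem _ _ (hξ a)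
  have hjet : jet m n φ = Pi.single (lastRow m i hi) 1 := by
    rw [← Wmat_mulVec, mulVec_mulVec, mul_nonsing_inv _ (isUnit_iff_ne_zero.2 hW), one_mulVec]
  have hjet' := jet_add_single_eq hφ hk (n := n) fun r hr => by
    rw [hjet, Pi.single_eq_of_ne]
    rintro rfl
    rcases hr with h | h
    · exact hik h
    · simp only [lastRow] at h
      omega
  rw [← Wmat_mulVec, hjet, topDiff_sum_smul] at hjet'
  calc y = (Wmat m ξ (n + Pi.single k 1))⁻¹ *ᵥ (Wmat m ξ (n + Pi.single k 1) *ᵥ y) := by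
        rw [mulVec_mulVec, nonsing_inv_mul _ (isUnit_iff_ne_zero.2 hW'), one_mulVec]
    _ = _ := by
        rw [hjet', mulVec_add, mulVec_smul]
        simp only [topDiff_apply]

theorem potential_dot_inv_mulVec_add_single_sub (hξ : ∀ a, ξ a ∈ tangentSolutions Q)
    {H : Fin N → (Fin N → ℤ) → ℝ}
    {Ω : (Σ j : Fin N, Fin (m j)) → (Fin N → ℤ) → ℝ}
    (hΩ : ∀ a, ∀ l : Fin N, Δ l (Ω a) = ξ a l * T l (H l)) {i k : Fin N} (hik : i ≠ k)
    (hi : 0 < m i) (hk : 0 < m k) {n : Fin N → ℤ} (hW : (Wmat m ξ n).det ≠ 0)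
    (hW' : (Wmat m ξ (n + Pi.single k 1)).det ≠ 0) :
    (fun a => Ω a (n + Pi.single k 1)) ⬝ᵥ
        ((Wmat m ξ (n + Pi.single k 1))⁻¹ *ᵥ Pi.single (lastRow m i hi) 1) -
      (fun a => Ω a n) ⬝ᵥ ((Wmat m ξ n)⁻¹ *ᵥ Pi.single (lastRow m i hi) 1) =
    -((fun a => (Δ k)^[m k] (ξ a k) n) ⬝ᵥ ((Wmat m ξ n)⁻¹ *ᵥ Pi.single (lastRow m i hi) 1)) *
      ((fun a => Ω a (n + Pi.single k 1)) ⬝ᵥ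
        ((Wmat m ξ (n + Pi.single k 1))⁻¹ *ᵥ Pi.single (lastRow m k hk) 1)) := by
  have hY := Wmat_inv_mulVec_single_lastRow_eq hξ hik hi hk hW hW'
  set y := (Wmat m ξ n)⁻¹ *ᵥ Pi.single (lastRow m i hi) 1
  set q := (fun a => (Δ k)^[m k] (ξ a k) n) ⬝ᵥ y
  have hΩ_shift : (fun a => Ω a (n + Pi.single k 1)) =
      (fun a => Ω a n) + H k (n + Pi.single k 1) • fun a => ξ a k n := by
    ext a
    have := congrFun (hΩ a k) n
    simp only [Δ, T, Pi.mul_apply] at this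
    simp only [Pi.add_apply, Pi.smul_apply, smul_eq_mul]
    linarith
  have horth : (fun a => ξ a k n) ⬝ᵥ y = 0 := by
    change (Wmat m ξ n *ᵥ y) ⟨k, 0, hk⟩ = 0
    rw [mulVec_mulVec, mul_nonsing_inv _ (isUnit_iff_ne_zero.2 hW), one_mulVec,
      Pi.single_eq_of_ne fun h => hik (congrArg Sigma.fst h).symm]
  rw [hY, dotProduct_add, dotProduct_smul, smul_eq_mul] at horth
  rw [hY, hΩ_shift]
  simp only [dotProduct_add, add_dotProduct, dotProduct_smul, smul_dotProduct, smul_eq_mul]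
  linear_combination H k (n + Pi.single k 1) * horth

end Levy

theorem statement_19_general (N : ℕ)
    (Q : Fin N → Fin N → (Fin N → ℤ) → ℝ)
    (m : Fin N → ℕ) (hm : ∀ j, 0 < m j)
    (ξ : (Σ j : Fin N, Fin (m j)) → Fin N → (Fin N → ℤ) → ℝ)
    (hξ : ∀ a, ∀ j k : Fin N, j ≠ k → Δ k (ξ a j) = T k (Q j k) * ξ a k)
    (χ : Fin N → (Fin N → ℤ) → ℝ)
    (hχ : ∀ j k : Fin N, j ≠ k → Δ k (χ j) = T k (Q j k) * χ k)
    (H : Fin N → (Fin N → ℤ) → ℝ)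
    (Ω : (Σ j : Fin N, Fin (m j)) → (Fin N → ℤ) → ℝ)
    (hΩ : ∀ a, ∀ l : Fin N, Δ l (Ω a) = ξ a l * T l (H l))
    (hdet : ∀ n : Fin N → ℤ, (Wmat m ξ n).det ≠ 0)
    (XM HM : Fin N → (Fin N → ℤ) → ℝ)
    (QM : Fin N → Fin N → (Fin N → ℤ) → ℝ)
    (hXM : ∀ (i : Fin N) (n : Fin N → ℤ),
      XM i n = (Xmat m ξ χ i n).det / (Wmat m ξ n).det)
    (hHM : ∀ (i : Fin N) (n : Fin N → ℤ),
      HM i n = -((Wmat m ξ n).updateRow (lastRow m i (hm i)) (fun a => Ω a n)).det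
                  / (Wmat m ξ n).det)
    (hQM : ∀ i j : Fin N, i ≠ j → ∀ n : Fin N → ℤ,
      QM i j n = -((Wmat m ξ n).updateRow (lastRow m j (hm j))
                      (fun a => (Δ i)^[m i] (ξ a i) n)).det
                  / (Wmat m ξ n).det) :
    ∀ i k : Fin N, i ≠ k →
      Δ k (XM i) = T k (QM i k) * XM k ∧
      Δ k (HM i) = QM k i * T k (HM k) := by
  intro i k hik
  have hξV : ∀ a, ξ a ∈ tangentSolutions Q := hξ
  refine ⟨funext fun n => ?_, funext fun n => ?_⟩
  · change XM i (n + Pi.single k 1) - XM i n = QM i k (n + Pi.single k 1) * XM k n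
    rw [hXM, hXM, hXM, hQM i k hik, det_Xmat_div ξ χ i (hdet _), det_Xmat_div ξ χ i (hdet _),
      det_Xmat_div ξ χ k (hdet _), neg_div, det_updateRow_div _ (hdet _)]
    exact levyTransform_add_single_sub hξV hχ hik (hm k) (hdet n) (hdet _)
  · change HM i (n + Pi.single k 1) - HM i n = QM k i n * HM k (n + Pi.single k 1)
    rw [hHM, hHM, hHM, hQM k i hik.symm]
    simp only [neg_div, det_updateRow_div _ (hdet _)]
    linear_combination
      -potential_dot_inv_mulVec_add_single_sub hξV hΩ hik (hm i) (hm k) (hdet n) (hdet _)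

/-- Iterated Levy transformation (Theorem 1): with `det 𝒲` nowhere vanishing, the data
`X_i[M] = det 𝕏_i / det 𝒲`, `H_i[M] = −det ℍ_i / det 𝒲` and
`Q_{ij}[M] = −det 𝒲_{ij} / det 𝒲` satisfy the quadrilateral-lattice linear systems
`Δ_k X_i[M] = (T_k Q_{ik}[M])·X_k[M]` and `Δ_k H_i[M] = Q_{ki}[M]·(T_k H_k[M])`
for all `i ≠ k`. -/
theorem statement_19 (N : ℕ) (hN : 2 ≤ N)
    (Q : Fin N → Fin N → (Fin N → ℤ) → ℝ)
    (m : Fin N → ℕ) (hm : ∀ j, 0 < m j)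
    (ξ : (Σ j : Fin N, Fin (m j)) → Fin N → (Fin N → ℤ) → ℝ)
    (hξ : ∀ a, ∀ j k : Fin N, j ≠ k → Δ k (ξ a j) = T k (Q j k) * ξ a k)
    (χ : Fin N → (Fin N → ℤ) → ℝ)
    (hχ : ∀ j k : Fin N, j ≠ k → Δ k (χ j) = T k (Q j k) * χ k)
    (H : Fin N → (Fin N → ℤ) → ℝ)
    (hH : ∀ j k : Fin N, j ≠ k → Δ j (H k) = Q j k * T j (H j))
    (Ω : (Σ j : Fin N, Fin (m j)) → (Fin N → ℤ) → ℝ)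
    (hΩ : ∀ a, ∀ l : Fin N, Δ l (Ω a) = ξ a l * T l (H l))
    (hdet : ∀ n : Fin N → ℤ, (Wmat m ξ n).det ≠ 0)
    (XM HM : Fin N → (Fin N → ℤ) → ℝ)
    (QM : Fin N → Fin N → (Fin N → ℤ) → ℝ)
    (hXM : ∀ (i : Fin N) (n : Fin N → ℤ),
      XM i n = (Xmat m ξ χ i n).det / (Wmat m ξ n).det)
    (hHM : ∀ (i : Fin N) (n : Fin N → ℤ),
      HM i n = -((Wmat m ξ n).updateRow (lastRow m i (hm i)) (fun a => Ω a n)).det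
                  / (Wmat m ξ n).det)
    (hQM : ∀ i j : Fin N, i ≠ j → ∀ n : Fin N → ℤ,
      QM i j n = -((Wmat m ξ n).updateRow (lastRow m j (hm j))
                      (fun a => (Δ i)^[m i] (ξ a i) n)).det
                  / (Wmat m ξ n).det) :
    ∀ i k : Fin N, i ≠ k →
      Δ k (XM i) = T k (QM i k) * XM k ∧
      Δ k (HM i) = QM k i * T k (HM k) :=
  statement_19_general N Q m hm ξ hξ χ hχ H Ω hΩ hdet XM HM QM hXM hHM hQM
end
end
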